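/- arXiv:2511.12408 — 2 statements merged into one kernel-verified Lean document; each statement's English description precedes it below -/
import Mathlib

section
/- The max-of-min labeling λ is an R-labeling of Π_n^B: for every pair x ≺ y in Π_n^B there exists a unique saturated chain from x to y whose label sequence is increasing (and its labels are in fact strictly increasing). -/
/-- An element of the signed partition lattice `Π_n^B`: a partition of `{−n,…,n}` into
nonempty blocks such that the set of blocks is closed under negation and any block
containing both `i` and `−i` for some `i > 0` contains `0`. -/
structure SignedPartition (n : ℕ) where
  blocks : Finset (Finset ℤ)
  nonempty_blocks : ∀ B ∈ blocks, B.Nonempty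
  subset_ground : ∀ B ∈ blocks, B ⊆ Finset.Icc (-(n : ℤ)) (n : ℤ)
  disjoint_blocks : ∀ B ∈ blocks, ∀ C ∈ blocks, B ≠ C → Disjoint B C
  covers : ∀ x ∈ Finset.Icc (-(n : ℤ)) (n : ℤ), ∃ B ∈ blocks, x ∈ B
  neg_mem : ∀ B ∈ blocks, B.image (fun k => -k) ∈ blocks
  zero_cond : ∀ B ∈ blocks, ∀ i : ℤ, 0 < i → i ∈ B → -i ∈ B → (0 : ℤ) ∈ B

namespace SignedPartition

variable {n : ℕ}

/-- The refinement order on `Π_n^B`: `x ≼ y` iff every block of `x` is contained in a block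
of `y`. -/
def le (x y : SignedPartition n) : Prop := ∀ B ∈ x.blocks, ∃ C ∈ y.blocks, B ⊆ C

/-- The strict refinement order on `Π_n^B`. -/
def lt (x y : SignedPartition n) : Prop := le x y ∧ ¬ le y x

/-- The cover relation `x ⋖ y` in `Π_n^B`: `x ≺ y` and there is no `z` strictly between. -/
def covby (x y : SignedPartition n) : Prop := lt x y ∧ ∀ z, lt x z → ¬ lt z y

end SignedPartition
/-- `m` is the minimum of `|B| = {|b| : b ∈ B}`, the set of absolute values of the block `B`. -/
def absMin (B : Finset ℤ) (m : ℕ) : Prop :=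
  (∃ b ∈ B, b.natAbs = m) ∧ ∀ b ∈ B, m ≤ b.natAbs

/-- The max-of-min edge labeling on `Π_n^B`: for a cover relation `x ⋖ y`, the label is
`max{min|B₁|, min|B₂|}`, where `B₁ ≠ B₂` are two distinct non-zero blocks of `x` contained
in a common block of `y`. -/
def MaxMinLabel {n : ℕ} (x y : SignedPartition n) (l : ℕ) : Prop :=
  ∃ B₁ ∈ x.blocks, ∃ B₂ ∈ x.blocks, B₁ ≠ B₂ ∧ (0 : ℤ) ∉ B₁ ∧ (0 : ℤ) ∉ B₂ ∧
    (∃ C ∈ y.blocks, B₁ ⊆ C ∧ B₂ ⊆ C) ∧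
    ∃ m₁ m₂ : ℕ, absMin B₁ m₁ ∧ absMin B₂ m₂ ∧ l = max m₁ m₂

/-- A saturated chain in `Π_n^B` from `x` to `y`: a list of lattice elements, starting at
`x`, ending at `y`, in which each element is covered by the next one. -/
def IsSatChain {n : ℕ} (x y : SignedPartition n) (c : List (SignedPartition n)) : Prop :=
  c.Chain' SignedPartition.covby ∧ c.head? = some x ∧ c.getLast? = some y

/-- `LabelSeq c ℓ`: the list `ℓ` is the sequence of max-of-min labels of the consecutive
cover relations along the chain `c`. -/
def LabelSeq {n : ℕ} : List (SignedPartition n) → List ℕ → Prop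
  | [], [] => True
  | [_], [] => True
  | a :: b :: rest, l :: ls => MaxMinLabel a b l ∧ LabelSeq (b :: rest) ls
  | _, _ => False

namespace SignedPartition

variable {n : ℕ}

theorem ext' {x y : SignedPartition n} (h : x.blocks = y.blocks) : x = y := by
  cases x; cases y; simpa using h

/-- Negation of a finite set of integers. -/
def negS (S : Finset ℤ) : Finset ℤ := S.image (fun k => -k)

@[simp] theorem mem_negS {S : Finset ℤ} {a : ℤ} : a ∈ negS S ↔ -a ∈ S := by
  constructor
  · intro h
    rcases Finset.mem_image.1 h with ⟨b, hb, rfl⟩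
    simpa using hb
  · intro h
    exact Finset.mem_image.2 ⟨-a, h, by ring⟩

@[simp] theorem negS_negS (S : Finset ℤ) : negS (negS S) = S := by
  ext a; simp

theorem negS_union (S T : Finset ℤ) : negS (S ∪ T) = negS S ∪ negS T := by
  ext a; simp [or_comm]

theorem negS_nonempty {S : Finset ℤ} (h : S.Nonempty) : (negS S).Nonempty := by
  rcases h with ⟨a, ha⟩
  exact ⟨-a, by simpa using ha⟩

theorem negS_subset {S T : Finset ℤ} (h : S ⊆ T) : negS S ⊆ negS T := by
  intro a ha; rw [mem_negS] at *; exact h ha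

theorem disjoint_negS {S T : Finset ℤ} (h : Disjoint S T) :
    Disjoint (negS S) (negS T) := by
  rw [Finset.disjoint_left] at *
  intro a ha hb
  exact h (mem_negS.1 ha) (mem_negS.1 hb)

theorem negS_mem {x : SignedPartition n} {B : Finset ℤ} (hB : B ∈ x.blocks) :
    negS B ∈ x.blocks := x.neg_mem B hB

theorem eq_of_mem_mem {x : SignedPartition n} {B C : Finset ℤ} {a : ℤ}
    (hB : B ∈ x.blocks) (hC : C ∈ x.blocks) (haB : a ∈ B) (haC : a ∈ C) : B = C := by
  by_contra hne
  exact Finset.disjoint_left.1 (x.disjoint_blocks B hB C hC hne) haB haC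

theorem zero_mem_ground : (0 : ℤ) ∈ Finset.Icc (-(n : ℤ)) (n : ℤ) := by
  simp

/-- The zero block. -/
noncomputable def zblk (x : SignedPartition n) : Finset ℤ :=
  (x.covers 0 zero_mem_ground).choose

theorem zblk_mem (x : SignedPartition n) : x.zblk ∈ x.blocks :=
  (x.covers 0 zero_mem_ground).choose_spec.1

theorem zero_mem_zblk (x : SignedPartition n) : (0 : ℤ) ∈ x.zblk :=
  (x.covers 0 zero_mem_ground).choose_spec.2

theorem eq_zblk {x : SignedPartition n} {B : Finset ℤ} (hB : B ∈ x.blocks)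
    (h0 : (0 : ℤ) ∈ B) : B = x.zblk :=
  eq_of_mem_mem hB x.zblk_mem h0 x.zero_mem_zblk

theorem negS_zblk (x : SignedPartition n) : negS x.zblk = x.zblk :=
  eq_of_mem_mem (negS_mem x.zblk_mem) x.zblk_mem
    (by simpa using x.zero_mem_zblk) x.zero_mem_zblk

theorem no_pair {x : SignedPartition n} {B : Finset ℤ} (hB : B ∈ x.blocks)
    (h0 : (0 : ℤ) ∉ B) {a : ℤ} (ha : a ∈ B) (hna : -a ∈ B) : False := by
  rcases lt_trichotomy a 0 with h | h | h
  · exact h0 (x.zero_cond B hB (-a) (by omega) hna (by simpa using ha))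
  · exact h0 (h ▸ ha)
  · exact h0 (x.zero_cond B hB a h ha hna)

theorem le_refl (x : SignedPartition n) : le x x := fun B hB => ⟨B, hB, Finset.Subset.refl B⟩

theorem le_trans {x y z : SignedPartition n} (h1 : le x y) (h2 : le y z) : le x z := by
  intro B hB
  rcases h1 B hB with ⟨C, hC, hBC⟩
  rcases h2 C hC with ⟨D, hD, hCD⟩
  exact ⟨D, hD, hBC.trans hCD⟩

/-- Under refinement, the block of `x` containing `a` sits inside the block of `y`
containing `a`. -/
theorem subset_of_le {x y : SignedPartition n} (h : le x y) {B C : Finset ℤ} {a : ℤ}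
    (hB : B ∈ x.blocks) (hC : C ∈ y.blocks) (haB : a ∈ B) (haC : a ∈ C) : B ⊆ C := by
  rcases h B hB with ⟨D, hD, hBD⟩
  rwa [eq_of_mem_mem hD hC (hBD haB) haC] at hBD

theorem le_antisymm {x y : SignedPartition n} (h1 : le x y) (h2 : le y x) : x = y := by
  apply ext'
  have key : ∀ (u v : SignedPartition n), le u v → le v u → u.blocks ⊆ v.blocks := by
    intro u v huv hvu B hB
    rcases huv B hB with ⟨C, hC, hBC⟩
    rcases hvu C hC with ⟨B', hB', hCB'⟩
    rcases u.nonempty_blocks B hB with ⟨a, ha⟩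
    have : B = B' := eq_of_mem_mem hB hB' ha (hCB' (hBC ha))
    have hCB : C ⊆ B := this ▸ hCB'
    rwa [Finset.Subset.antisymm hBC hCB]
  exact Finset.Subset.antisymm (key x y h1 h2) (key y x h2 h1)

theorem lt_of_le_ne {x y : SignedPartition n} (h : le x y) (hne : x ≠ y) : lt x y :=
  ⟨h, fun h' => hne (le_antisymm h h')⟩

theorem ne_of_lt {x y : SignedPartition n} (h : lt x y) : x ≠ y := by
  rintro rfl; exact h.2 h.1

end SignedPartition
namespace SignedPartition

variable {n : ℕ}

/-- The minimum absolute value in a block. -/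
noncomputable def amin (B : Finset ℤ) : ℕ := sInf {m : ℕ | ∃ b ∈ B, b.natAbs = m}

theorem absMin_amin {B : Finset ℤ} (h : B.Nonempty) : absMin B (amin B) := by
  rcases h with ⟨b, hb⟩
  have hne : {m : ℕ | ∃ b ∈ B, b.natAbs = m}.Nonempty := ⟨b.natAbs, b, hb, rfl⟩
  constructor
  · exact Nat.sInf_mem hne
  · intro c hc
    exact Nat.sInf_le ⟨c, hc, rfl⟩

theorem absMin_unique {B : Finset ℤ} {m m' : ℕ} (h : absMin B m) (h' : absMin B m') :
    m = m' := by
  rcases h.1 with ⟨b, hb, rfl⟩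
  rcases h'.1 with ⟨c, hc, rfl⟩
  exact Nat.le_antisymm (h.2 c hc) (h'.2 b hb)

theorem absMin_eq_amin {B : Finset ℤ} {m : ℕ} (h : absMin B m) : m = amin B :=
  absMin_unique h (absMin_amin ⟨h.1.choose, h.1.choose_spec.1⟩)

theorem amin_le {B : Finset ℤ} {a : ℤ} (ha : a ∈ B) : amin B ≤ a.natAbs :=
  Nat.sInf_le ⟨a, ha, rfl⟩

theorem amin_mem {B : Finset ℤ} (h : B.Nonempty) : ∃ b ∈ B, b.natAbs = amin B :=
  (absMin_amin h).1

theorem amin_negS (B : Finset ℤ) : amin (negS B) = amin B := by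
  unfold amin
  congr 1
  ext m
  constructor
  · rintro ⟨b, hb, rfl⟩
    exact ⟨-b, mem_negS.1 hb, by simp⟩
  · rintro ⟨b, hb, rfl⟩
    exact ⟨-b, by simpa using hb, by simp⟩

theorem absMin_negS {B : Finset ℤ} {m : ℕ} (h : absMin B m) : absMin (negS B) m := by
  constructor
  · rcases h.1 with ⟨b, hb, rfl⟩
    exact ⟨-b, by simpa using hb, by simp⟩
  · intro b hb
    have := h.2 (-b) (mem_negS.1 hb)
    simpa using this

theorem amin_union {B C : Finset ℤ} (hB : B.Nonempty) (hC : C.Nonempty) :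
    amin (B ∪ C) = min (amin B) (amin C) := by
  have h : absMin (B ∪ C) (min (amin B) (amin C)) := by
    constructor
    · rcases Nat.le_total (amin B) (amin C) with h | h
      · rcases amin_mem hB with ⟨b, hb, hb'⟩
        exact ⟨b, Finset.mem_union_left _ hb, by omega⟩
      · rcases amin_mem hC with ⟨c, hc, hc'⟩
        exact ⟨c, Finset.mem_union_right _ hc, by omega⟩
    · intro b hb
      rcases Finset.mem_union.1 hb with h | h
      · exact Nat.le_trans (Nat.min_le_left _ _) (amin_le h)
      · exact Nat.le_trans (Nat.min_le_right _ _) (amin_le h)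
  exact (absMin_eq_amin h).symm

/-- Two blocks containing elements of the same absolute value are equal or negatives. -/
theorem eq_or_negS_of_abs_eq {x : SignedPartition n} {B C : Finset ℤ} {v w : ℤ}
    (hB : B ∈ x.blocks) (hC : C ∈ x.blocks) (hv : v ∈ B) (hw : w ∈ C)
    (habs : v.natAbs = w.natAbs) : C = B ∨ C = negS B := by
  have : w = v ∨ w = -v := by omega
  rcases this with rfl | rfl
  · exact Or.inl (eq_of_mem_mem hC hB hw hv)
  · exact Or.inr (eq_of_mem_mem hC (negS_mem hB) hw (by simpa using hv))

/-- Distinct blocks that are not negatives of each other have different minimum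
absolute values. -/
theorem amin_ne {x : SignedPartition n} {B C : Finset ℤ}
    (hB : B ∈ x.blocks) (hC : C ∈ x.blocks) (hne : C ≠ B) (hneg : C ≠ negS B) :
    amin B ≠ amin C := by
  intro h
  rcases amin_mem (x.nonempty_blocks B hB) with ⟨v, hv, hv'⟩
  rcases amin_mem (x.nonempty_blocks C hC) with ⟨w, hw, hw'⟩
  rcases eq_or_negS_of_abs_eq hB hC hv hw (by omega) with h' | h'
  · exact hne h'
  · exact hneg h'

end SignedPartition
namespace SignedPartition

variable {n : ℕ}

theorem negS_ground {S : Finset ℤ} (h : S ⊆ Finset.Icc (-(n : ℤ)) (n : ℤ)) :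
    negS S ⊆ Finset.Icc (-(n : ℤ)) (n : ℤ) := by
  intro a ha
  have := h (mem_negS.1 ha)
  simp only [Finset.mem_Icc] at *
  omega

theorem ne_negS_self {x : SignedPartition n} {B : Finset ℤ} (hB : B ∈ x.blocks)
    (h0 : (0 : ℤ) ∉ B) : B ≠ negS B := by
  intro h
  rcases x.nonempty_blocks B hB with ⟨a, ha⟩
  exact no_pair hB h0 ha (mem_negS.1 (h ▸ ha))

theorem pair_not_union {x : SignedPartition n} {B C : Finset ℤ} (hB : B ∈ x.blocks)
    (hC : C ∈ x.blocks) (h0B : (0 : ℤ) ∉ B) (h0C : (0 : ℤ) ∉ C) (hCnB : C ≠ negS B)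
    {a : ℤ} (ha : a ∈ B ∪ C) (hna : -a ∈ B ∪ C) : False := by
  rcases Finset.mem_union.1 ha with h1 | h1 <;> rcases Finset.mem_union.1 hna with h2 | h2
  · exact no_pair hB h0B h1 h2
  · exact hCnB (eq_of_mem_mem hC (negS_mem hB) h2 (by simpa using h1))
  · exact hCnB (eq_of_mem_mem hC (negS_mem hB) h1 (by simpa using h2))
  · exact no_pair hC h0C h1 h2

/-- The set of blocks after merging two non-zero blocks `B`, `C` (and their negatives). -/
def mergeBlocks (x : SignedPartition n) (B C : Finset ℤ) : Finset (Finset ℤ) :=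
  (x.blocks \ {B, C, negS B, negS C}) ∪ {B ∪ C, negS (B ∪ C)}

theorem mem_mergeBlocks {x : SignedPartition n} {B C D : Finset ℤ} :
    D ∈ mergeBlocks x B C ↔
      (D ∈ x.blocks ∧ D ≠ B ∧ D ≠ C ∧ D ≠ negS B ∧ D ≠ negS C) ∨
        D = B ∪ C ∨ D = negS (B ∪ C) := by
  simp only [mergeBlocks, Finset.mem_union, Finset.mem_sdiff, Finset.mem_insert,
    Finset.mem_singleton]
  tauto

/-- Merging two blocks (and their negatives) yields a signed partition. -/
def mergeSP (x : SignedPartition n) (B C : Finset ℤ) (hB : B ∈ x.blocks)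
    (hC : C ∈ x.blocks) (h0B : (0 : ℤ) ∉ B) (h0C : (0 : ℤ) ∉ C) (hCB : C ≠ B)
    (hCnB : C ≠ negS B) : SignedPartition n where
  blocks := mergeBlocks x B C
  nonempty_blocks := by
    intro D hD
    rcases mem_mergeBlocks.1 hD with ⟨hD1, _⟩ | rfl | rfl
    · exact x.nonempty_blocks D hD1
    · rcases x.nonempty_blocks B hB with ⟨a, ha⟩
      exact ⟨a, Finset.mem_union_left _ ha⟩
    · rcases x.nonempty_blocks B hB with ⟨a, ha⟩
      exact ⟨-a, mem_negS.2 (by simpa using Finset.mem_union_left C ha)⟩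
  subset_ground := by
    intro D hD
    rcases mem_mergeBlocks.1 hD with ⟨hD1, _⟩ | rfl | rfl
    · exact x.subset_ground D hD1
    · exact Finset.union_subset (x.subset_ground B hB) (x.subset_ground C hC)
    · exact negS_ground (Finset.union_subset (x.subset_ground B hB) (x.subset_ground C hC))
  disjoint_blocks := by
    have key : ∀ a : ℤ, a ∈ B ∪ C → -a ∈ B ∪ C → False :=
      fun a ha hna => pair_not_union hB hC h0B h0C hCnB ha hna
    have hBC' : Disjoint (B ∪ C) (negS (B ∪ C)) := by
      rw [Finset.disjoint_left]
      intro a ha ha'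
      exact key a ha (mem_negS.1 ha')
    have old : ∀ D, D ∈ x.blocks → D ≠ B → D ≠ C → Disjoint D (B ∪ C) := by
      intro D hD h1 h2
      rw [Finset.disjoint_union_right]
      exact ⟨x.disjoint_blocks D hD B hB h1, x.disjoint_blocks D hD C hC h2⟩
    have oldn : ∀ D, D ∈ x.blocks → D ≠ negS B → D ≠ negS C → Disjoint D (negS (B ∪ C)) := by
      intro D hD h1 h2
      rw [negS_union, Finset.disjoint_union_right]
      exact ⟨x.disjoint_blocks D hD (negS B) (negS_mem hB) h1,
        x.disjoint_blocks D hD (negS C) (negS_mem hC) h2⟩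
    intro D hD E hE hne
    rcases mem_mergeBlocks.1 hD with ⟨hD1, hDB, hDC, hDnB, hDnC⟩ | rfl | rfl <;>
      rcases mem_mergeBlocks.1 hE with ⟨hE1, hEB, hEC, hEnB, hEnC⟩ | rfl | rfl
    · exact x.disjoint_blocks D hD1 E hE1 hne
    · exact old D hD1 hDB hDC
    · exact oldn D hD1 hDnB hDnC
    · exact (old E hE1 hEB hEC).symm
    · exact absurd rfl hne
    · exact hBC'
    · exact (oldn E hE1 hEnB hEnC).symm
    · exact hBC'.symm
    · exact absurd rfl hne
  covers := by
    intro a ha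
    rcases x.covers a ha with ⟨W, hW, haW⟩
    by_cases h1 : W = B
    · exact ⟨B ∪ C, mem_mergeBlocks.2 (Or.inr (Or.inl rfl)),
        Finset.mem_union_left _ (h1 ▸ haW)⟩
    by_cases h2 : W = C
    · exact ⟨B ∪ C, mem_mergeBlocks.2 (Or.inr (Or.inl rfl)),
        Finset.mem_union_right _ (h2 ▸ haW)⟩
    by_cases h3 : W = negS B
    · refine ⟨negS (B ∪ C), mem_mergeBlocks.2 (Or.inr (Or.inr rfl)), ?_⟩
      rw [negS_union]
      exact Finset.mem_union_left _ (h3 ▸ haW)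
    by_cases h4 : W = negS C
    · refine ⟨negS (B ∪ C), mem_mergeBlocks.2 (Or.inr (Or.inr rfl)), ?_⟩
      rw [negS_union]
      exact Finset.mem_union_right _ (h4 ▸ haW)
    · exact ⟨W, mem_mergeBlocks.2 (Or.inl ⟨hW, h1, h2, h3, h4⟩), haW⟩
  neg_mem := by
    intro D hD
    show negS D ∈ mergeBlocks x B C
    rcases mem_mergeBlocks.1 hD with ⟨hD1, hDB, hDC, hDnB, hDnC⟩ | rfl | rfl
    · refine mem_mergeBlocks.2 (Or.inl ⟨negS_mem hD1, ?_, ?_, ?_, ?_⟩)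
      · intro h; exact hDnB (by rw [← h, negS_negS])
      · intro h; exact hDnC (by rw [← h, negS_negS])
      · intro h; exact hDB (by simpa using congrArg negS h)
      · intro h; exact hDC (by simpa using congrArg negS h)
    · exact mem_mergeBlocks.2 (Or.inr (Or.inr rfl))
    · rw [negS_negS]
      exact mem_mergeBlocks.2 (Or.inr (Or.inl rfl))
  zero_cond := by
    intro D hD i hi h1 h2
    rcases mem_mergeBlocks.1 hD with ⟨hD1, _⟩ | rfl | rfl
    · exact x.zero_cond D hD1 i hi h1 h2
    · exact absurd h2 (fun h2 => pair_not_union hB hC h0B h0C hCnB h1 h2)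
    · exact absurd (mem_negS.1 h1)
        (fun h1' => pair_not_union hB hC h0B h0C hCnB h1' (by simpa using mem_negS.1 h2))

theorem mergeSP_blocks (x : SignedPartition n) (B C : Finset ℤ) (hB : B ∈ x.blocks)
    (hC : C ∈ x.blocks) (h0B : (0 : ℤ) ∉ B) (h0C : (0 : ℤ) ∉ C) (hCB : C ≠ B)
    (hCnB : C ≠ negS B) :
    (mergeSP x B C hB hC h0B h0C hCB hCnB).blocks = mergeBlocks x B C := rfl

/-- The set of blocks after absorbing a non-zero block `B` (and its negative) into the
zero block. -/
noncomputable def absorbBlocks (x : SignedPartition n) (B : Finset ℤ) : Finset (Finset ℤ) :=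
  (x.blocks \ {x.zblk, B, negS B}) ∪ {x.zblk ∪ B ∪ negS B}

theorem mem_absorbBlocks {x : SignedPartition n} {B D : Finset ℤ} :
    D ∈ absorbBlocks x B ↔
      (D ∈ x.blocks ∧ D ≠ x.zblk ∧ D ≠ B ∧ D ≠ negS B) ∨ D = x.zblk ∪ B ∪ negS B := by
  simp only [absorbBlocks, Finset.mem_union, Finset.mem_sdiff, Finset.mem_insert,
    Finset.mem_singleton]
  tauto

/-- Absorbing a non-zero block and its negative into the zero block yields a signed
partition. -/
noncomputable def absorbSP (x : SignedPartition n) (B : Finset ℤ) (hB : B ∈ x.blocks)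
    (h0B : (0 : ℤ) ∉ B) : SignedPartition n where
  blocks := absorbBlocks x B
  nonempty_blocks := by
    intro D hD
    rcases mem_absorbBlocks.1 hD with ⟨hD1, _⟩ | rfl
    · exact x.nonempty_blocks D hD1
    · exact ⟨0, by simp [x.zero_mem_zblk]⟩
  subset_ground := by
    intro D hD
    rcases mem_absorbBlocks.1 hD with ⟨hD1, _⟩ | rfl
    · exact x.subset_ground D hD1
    · exact Finset.union_subset
        (Finset.union_subset (x.subset_ground _ x.zblk_mem) (x.subset_ground B hB))
        (negS_ground (x.subset_ground B hB))
  disjoint_blocks := by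
    have hZB : x.zblk ≠ B := fun h => h0B (h ▸ x.zero_mem_zblk)
    have hZnB : x.zblk ≠ negS B := fun h => by
      have : (0 : ℤ) ∈ negS B := h ▸ x.zero_mem_zblk
      exact h0B (by simpa using this)
    have old : ∀ D, D ∈ x.blocks → D ≠ x.zblk → D ≠ B → D ≠ negS B →
        Disjoint D (x.zblk ∪ B ∪ negS B) := by
      intro D hD h1 h2 h3
      rw [Finset.disjoint_union_right, Finset.disjoint_union_right]
      exact ⟨⟨x.disjoint_blocks D hD _ x.zblk_mem h1, x.disjoint_blocks D hD B hB h2⟩,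
        x.disjoint_blocks D hD _ (negS_mem hB) h3⟩
    intro D hD E hE hne
    rcases mem_absorbBlocks.1 hD with ⟨hD1, hDZ, hDB, hDnB⟩ | rfl <;>
      rcases mem_absorbBlocks.1 hE with ⟨hE1, hEZ, hEB, hEnB⟩ | rfl
    · exact x.disjoint_blocks D hD1 E hE1 hne
    · exact old D hD1 hDZ hDB hDnB
    · exact (old E hE1 hEZ hEB hEnB).symm
    · exact absurd rfl hne
  covers := by
    intro a ha
    rcases x.covers a ha with ⟨W, hW, haW⟩
    by_cases h1 : W = x.zblk
    · exact ⟨_, mem_absorbBlocks.2 (Or.inr rfl),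
        Finset.mem_union_left _ (Finset.mem_union_left _ (h1 ▸ haW))⟩
    by_cases h2 : W = B
    · exact ⟨_, mem_absorbBlocks.2 (Or.inr rfl),
        Finset.mem_union_left _ (Finset.mem_union_right _ (h2 ▸ haW))⟩
    by_cases h3 : W = negS B
    · exact ⟨_, mem_absorbBlocks.2 (Or.inr rfl), Finset.mem_union_right _ (h3 ▸ haW)⟩
    · exact ⟨W, mem_absorbBlocks.2 (Or.inl ⟨hW, h1, h2, h3⟩), haW⟩
  neg_mem := by
    intro D hD
    show negS D ∈ absorbBlocks x B
    rcases mem_absorbBlocks.1 hD with ⟨hD1, hDZ, hDB, hDnB⟩ | rfl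
    · refine mem_absorbBlocks.2 (Or.inl ⟨negS_mem hD1, ?_, ?_, ?_⟩)
      · intro h
        exact hDZ (by rw [← negS_negS D, h, negS_zblk])
      · intro h; exact hDnB (by rw [← h, negS_negS])
      · intro h; exact hDB (by simpa using congrArg negS h)
    · refine mem_absorbBlocks.2 (Or.inr ?_)
      rw [negS_union, negS_union, negS_zblk, negS_negS]
      ext a
      simp only [Finset.mem_union]
      tauto
  zero_cond := by
    intro D hD i hi h1 h2
    rcases mem_absorbBlocks.1 hD with ⟨hD1, _⟩ | rfl
    · exact x.zero_cond D hD1 i hi h1 h2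
    · exact Finset.mem_union_left _ (Finset.mem_union_left _ x.zero_mem_zblk)

theorem absorbSP_blocks (x : SignedPartition n) (B : Finset ℤ) (hB : B ∈ x.blocks)
    (h0B : (0 : ℤ) ∉ B) : (absorbSP x B hB h0B).blocks = absorbBlocks x B := rfl

end SignedPartition
namespace SignedPartition

variable {n : ℕ}

theorem block_eq_of_subset_union {x : SignedPartition n} {B1 B C : Finset ℤ}
    (hB1 : B1 ∈ x.blocks) (hB : B ∈ x.blocks) (hC : C ∈ x.blocks)
    (h : B1 ⊆ B ∪ C) : B1 = B ∨ B1 = C := by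
  rcases x.nonempty_blocks B1 hB1 with ⟨a, ha⟩
  rcases Finset.mem_union.1 (h ha) with h' | h'
  · exact Or.inl (eq_of_mem_mem hB1 hB ha h')
  · exact Or.inr (eq_of_mem_mem hB1 hC ha h')

theorem block_eq_of_subset_union3 {x : SignedPartition n} {B1 B C D : Finset ℤ}
    (hB1 : B1 ∈ x.blocks) (hB : B ∈ x.blocks) (hC : C ∈ x.blocks) (hD : D ∈ x.blocks)
    (h : B1 ⊆ B ∪ C ∪ D) : B1 = B ∨ B1 = C ∨ B1 = D := by
  rcases x.nonempty_blocks B1 hB1 with ⟨a, ha⟩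
  rcases Finset.mem_union.1 (h ha) with h' | h'
  · rcases Finset.mem_union.1 h' with h'' | h''
    · exact Or.inl (eq_of_mem_mem hB1 hB ha h'')
    · exact Or.inr (Or.inl (eq_of_mem_mem hB1 hC ha h''))
  · exact Or.inr (Or.inr (eq_of_mem_mem hB1 hD ha h'))

theorem zblk_subset_of_le {x z : SignedPartition n} (h : le x z) {E : Finset ℤ}
    (hE : E ∈ z.blocks) (h0 : (0 : ℤ) ∈ E) : x.zblk ⊆ E :=
  subset_of_le h x.zblk_mem hE x.zero_mem_zblk h0

theorem negS_eq_self_of_zero_mem {z : SignedPartition n} {E : Finset ℤ}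
    (hE : E ∈ z.blocks) (h0 : (0 : ℤ) ∈ E) : negS E = E :=
  eq_of_mem_mem (negS_mem hE) hE (by simpa using h0) h0

theorem zero_mem_of_pair {z : SignedPartition n} {E : Finset ℤ} (hE : E ∈ z.blocks)
    {a : ℤ} (ha : a ∈ E) (hna : -a ∈ E) (h0 : a ≠ 0) : (0 : ℤ) ∈ E := by
  rcases lt_trichotomy a 0 with h | h | h
  · exact z.zero_cond E hE (-a) (by omega) hna (by simpa using ha)
  · exact absurd h h0
  · exact z.zero_cond E hE a h ha hna

/-- If `x < z` then some block of `z` contains two distinct blocks of `x`. -/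
theorem two_blocks {x z : SignedPartition n} (h : lt x z) :
    ∃ E ∈ z.blocks, ∃ B1 ∈ x.blocks, ∃ B2 ∈ x.blocks, B1 ≠ B2 ∧ B1 ⊆ E ∧ B2 ⊆ E := by
  rcases h with ⟨hle, hnle⟩
  rw [le] at hnle
  push_neg at hnle
  rcases hnle with ⟨E, hE, hforall⟩
  rcases z.nonempty_blocks E hE with ⟨a, ha⟩
  rcases x.covers a (z.subset_ground E hE ha) with ⟨B1, hB1, haB1⟩
  have hB1E : B1 ⊆ E := subset_of_le hle hB1 hE haB1 ha
  have : ¬ E ⊆ B1 := hforall B1 hB1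
  rcases Finset.not_subset.1 this with ⟨b, hbE, hbB1⟩
  rcases x.covers b (z.subset_ground E hE hbE) with ⟨B2, hB2, hbB2⟩
  have hB2E : B2 ⊆ E := subset_of_le hle hB2 hE hbB2 hbE
  exact ⟨E, hE, B1, hB1, B2, hB2, fun h => hbB1 (h ▸ hbB2), hB1E, hB2E⟩

section MergeOrder

variable {x : SignedPartition n} {B C : Finset ℤ} {hB : B ∈ x.blocks}
  {hC : C ∈ x.blocks} {h0B : (0 : ℤ) ∉ B} {h0C : (0 : ℤ) ∉ C} {hCB : C ≠ B}
  {hCnB : C ≠ negS B}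

theorem le_mergeSP : le x (mergeSP x B C hB hC h0B h0C hCB hCnB) := by
  intro W hW
  by_cases h1 : W = B
  · exact ⟨B ∪ C, mem_mergeBlocks.2 (Or.inr (Or.inl rfl)),
      h1 ▸ Finset.subset_union_left⟩
  by_cases h2 : W = C
  · exact ⟨B ∪ C, mem_mergeBlocks.2 (Or.inr (Or.inl rfl)),
      h2 ▸ Finset.subset_union_right⟩
  by_cases h3 : W = negS B
  · refine ⟨negS (B ∪ C), mem_mergeBlocks.2 (Or.inr (Or.inr rfl)), ?_⟩
    rw [negS_union]
    exact h3 ▸ Finset.subset_union_left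
  by_cases h4 : W = negS C
  · refine ⟨negS (B ∪ C), mem_mergeBlocks.2 (Or.inr (Or.inr rfl)), ?_⟩
    rw [negS_union]
    exact h4 ▸ Finset.subset_union_right
  · exact ⟨W, mem_mergeBlocks.2 (Or.inl ⟨hW, h1, h2, h3, h4⟩), Finset.Subset.refl W⟩

theorem lt_mergeSP : lt x (mergeSP x B C hB hC h0B h0C hCB hCnB) := by
  refine ⟨le_mergeSP, fun hle => ?_⟩
  rcases hle (B ∪ C) (mem_mergeBlocks.2 (Or.inr (Or.inl rfl))) with ⟨W, hW, hsub⟩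
  rcases x.nonempty_blocks B hB with ⟨a, ha⟩
  rcases x.nonempty_blocks C hC with ⟨c, hc⟩
  have hWB : W = B := (eq_of_mem_mem hW hB (hsub (Finset.mem_union_left _ ha)) ha).symm ▸ rfl
  have : B = W := eq_of_mem_mem hB hW ha (hsub (Finset.mem_union_left _ ha))
  have hcB : c ∈ B := this ▸ hsub (Finset.mem_union_right _ hc)
  exact Finset.disjoint_left.1 (x.disjoint_blocks C hC B hB hCB) hc hcB

theorem covby_mergeSP : covby x (mergeSP x B C hB hC h0B h0C hCB hCnB) := by
  refine ⟨lt_mergeSP, ?_⟩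
  rintro z ⟨hxz, hnzx⟩ ⟨hzw, hnwz⟩
  apply hnwz
  obtain ⟨E, hE, B1, hB1, B2, hB2, hne, hsub1, hsub2⟩ := two_blocks ⟨hxz, hnzx⟩
  obtain ⟨D, hD, hED⟩ := hzw E hE
  have key : ∃ F ∈ z.blocks, B ∪ C ⊆ F := by
    rcases mem_mergeBlocks.1 hD with ⟨hD1, _⟩ | rfl | rfl
    · exfalso
      rcases x.nonempty_blocks B1 hB1 with ⟨a, ha⟩
      rcases x.nonempty_blocks B2 hB2 with ⟨b, hb⟩
      have e1 : B1 = D := eq_of_mem_mem hB1 hD1 ha (hED (hsub1 ha))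
      have e2 : B2 = D := eq_of_mem_mem hB2 hD1 hb (hED (hsub2 hb))
      exact hne (e1.trans e2.symm)
    · have h1 := block_eq_of_subset_union hB1 hB hC (hsub1.trans hED)
      have h2 := block_eq_of_subset_union hB2 hB hC (hsub2.trans hED)
      refine ⟨E, hE, ?_⟩
      rcases h1 with rfl | rfl <;> rcases h2 with rfl | rfl
      · exact absurd rfl hne
      · exact Finset.union_subset hsub1 hsub2
      · exact Finset.union_subset hsub2 hsub1
      · exact absurd rfl hne
    · rw [negS_union] at hED
      have h1 := block_eq_of_subset_union hB1 (negS_mem hB) (negS_mem hC) (hsub1.trans hED)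
      have h2 := block_eq_of_subset_union hB2 (negS_mem hB) (negS_mem hC) (hsub2.trans hED)
      refine ⟨negS E, negS_mem hE, ?_⟩
      have : negS B ∪ negS C ⊆ E := by
        rcases h1 with rfl | rfl <;> rcases h2 with rfl | rfl
        · exact absurd rfl hne
        · exact Finset.union_subset hsub1 hsub2
        · exact Finset.union_subset hsub2 hsub1
        · exact absurd rfl hne
      have := negS_subset this
      rwa [negS_union, negS_negS, negS_negS] at this
  rcases key with ⟨F, hF, hBCF⟩
  intro D' hD'
  rcases mem_mergeBlocks.1 hD' with ⟨hmem, _⟩ | rfl | rfl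
  · exact hxz D' hmem
  · exact ⟨F, hF, hBCF⟩
  · exact ⟨negS F, negS_mem hF, negS_subset hBCF⟩

end MergeOrder

section AbsorbOrder

variable {x : SignedPartition n} {B : Finset ℤ} {hB : B ∈ x.blocks} {h0B : (0 : ℤ) ∉ B}

theorem le_absorbSP : le x (absorbSP x B hB h0B) := by
  intro W hW
  by_cases h1 : W = x.zblk
  · refine ⟨_, mem_absorbBlocks.2 (Or.inr rfl), fun a ha => ?_⟩
    exact Finset.mem_union_left _ (Finset.mem_union_left _ (h1 ▸ ha))
  by_cases h2 : W = B
  · refine ⟨_, mem_absorbBlocks.2 (Or.inr rfl), fun a ha => ?_⟩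
    exact Finset.mem_union_left _ (Finset.mem_union_right _ (h2 ▸ ha))
  by_cases h3 : W = negS B
  · exact ⟨_, mem_absorbBlocks.2 (Or.inr rfl), h3 ▸ Finset.subset_union_right⟩
  · exact ⟨W, mem_absorbBlocks.2 (Or.inl ⟨hW, h1, h2, h3⟩), Finset.Subset.refl W⟩

theorem lt_absorbSP : lt x (absorbSP x B hB h0B) := by
  refine ⟨le_absorbSP, fun hle => ?_⟩
  rcases hle (x.zblk ∪ B ∪ negS B) (mem_absorbBlocks.2 (Or.inr rfl)) with ⟨W, hW, hsub⟩
  have h0W : (0 : ℤ) ∈ W :=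
    hsub (Finset.mem_union_left _ (Finset.mem_union_left _ x.zero_mem_zblk))
  rcases x.nonempty_blocks B hB with ⟨a, ha⟩
  have haW : a ∈ W := hsub (Finset.mem_union_left _ (Finset.mem_union_right _ ha))
  have : B = W := eq_of_mem_mem hB hW ha haW
  exact h0B (this ▸ h0W)

theorem covby_absorbSP : covby x (absorbSP x B hB h0B) := by
  refine ⟨lt_absorbSP, ?_⟩
  rintro z ⟨hxz, hnzx⟩ ⟨hzw, hnwz⟩
  apply hnwz
  obtain ⟨E, hE, B1, hB1, B2, hB2, hne, hsub1, hsub2⟩ := two_blocks ⟨hxz, hnzx⟩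
  obtain ⟨D, hD, hED⟩ := hzw E hE
  have key : ∃ F ∈ z.blocks, x.zblk ∪ B ∪ negS B ⊆ F := by
    rcases mem_absorbBlocks.1 hD with ⟨hD1, _⟩ | rfl
    · exfalso
      rcases x.nonempty_blocks B1 hB1 with ⟨a, ha⟩
      rcases x.nonempty_blocks B2 hB2 with ⟨b, hb⟩
      exact hne ((eq_of_mem_mem hB1 hD1 ha (hED (hsub1 ha))).trans
        (eq_of_mem_mem hB2 hD1 hb (hED (hsub2 hb))).symm)
    · have h1 := block_eq_of_subset_union3 hB1 x.zblk_mem hB (negS_mem hB) (hsub1.trans hED)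
      have h2 := block_eq_of_subset_union3 hB2 x.zblk_mem hB (negS_mem hB) (hsub2.trans hED)
      refine ⟨E, hE, ?_⟩
      rcases x.nonempty_blocks B hB with ⟨a, ha⟩
      have ha0 : a ≠ 0 := fun h => h0B (h ▸ ha)
      -- facts we will use repeatedly
      have hzero : (x.zblk ⊆ E ∧ B ⊆ E) ∨ (x.zblk ⊆ E ∧ negS B ⊆ E) ∨
          (B ⊆ E ∧ negS B ⊆ E) := by
        rcases h1 with rfl | rfl | rfl <;> rcases h2 with rfl | rfl | rfl
        · exact absurd rfl hne
        · exact Or.inl ⟨hsub1, hsub2⟩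
        · exact Or.inr (Or.inl ⟨hsub1, hsub2⟩)
        · exact Or.inl ⟨hsub2, hsub1⟩
        · exact absurd rfl hne
        · exact Or.inr (Or.inr ⟨hsub1, hsub2⟩)
        · exact Or.inr (Or.inl ⟨hsub2, hsub1⟩)
        · exact Or.inr (Or.inr ⟨hsub2, hsub1⟩)
        · exact absurd rfl hne
      rcases hzero with ⟨hZ, hBE⟩ | ⟨hZ, hnBE⟩ | ⟨hBE, hnBE⟩
      · have h0E : (0 : ℤ) ∈ E := hZ x.zero_mem_zblk
        have hnegE : negS E = E := negS_eq_self_of_zero_mem hE h0E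
        have : negS B ⊆ E := by
          have := negS_subset hBE
          rwa [hnegE] at this
        exact Finset.union_subset (Finset.union_subset hZ hBE) this
      · have h0E : (0 : ℤ) ∈ E := hZ x.zero_mem_zblk
        have hnegE : negS E = E := negS_eq_self_of_zero_mem hE h0E
        have hBE : B ⊆ E := by
          have := negS_subset hnBE
          rwa [negS_negS, hnegE] at this
        exact Finset.union_subset (Finset.union_subset hZ hBE) hnBE
      · have h0E : (0 : ℤ) ∈ E :=
          zero_mem_of_pair hE (hBE ha) (hnBE (by simpa using ha)) ha0
        exact Finset.union_subset
          (Finset.union_subset (zblk_subset_of_le hxz hE h0E) hBE) hnBE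
  rcases key with ⟨F, hF, hNF⟩
  intro D' hD'
  rcases mem_absorbBlocks.1 hD' with ⟨hmem, _⟩ | rfl
  · exact hxz D' hmem
  · exact ⟨F, hF, hNF⟩

end AbsorbOrder

end SignedPartition
namespace SignedPartition

variable {n : ℕ}

theorem le_merge_of_subset {x z : SignedPartition n} (hxz : le x z) {B C : Finset ℤ}
    {hB : B ∈ x.blocks} {hC : C ∈ x.blocks} {h0B : (0 : ℤ) ∉ B} {h0C : (0 : ℤ) ∉ C}
    {hCB : C ≠ B} {hCnB : C ≠ negS B} {E : Finset ℤ} (hE : E ∈ z.blocks)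
    (hBC : B ∪ C ⊆ E) : le (mergeSP x B C hB hC h0B h0C hCB hCnB) z := by
  intro D' hD'
  rcases mem_mergeBlocks.1 hD' with ⟨hmem, _⟩ | rfl | rfl
  · exact hxz D' hmem
  · exact ⟨E, hE, hBC⟩
  · exact ⟨negS E, negS_mem hE, negS_subset hBC⟩

theorem le_absorb_of_subset {x z : SignedPartition n} (hxz : le x z) {B : Finset ℤ}
    {hB : B ∈ x.blocks} {h0B : (0 : ℤ) ∉ B} {E : Finset ℤ} (hE : E ∈ z.blocks)
    (hN : x.zblk ∪ B ∪ negS B ⊆ E) : le (absorbSP x B hB h0B) z := by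
  intro D' hD'
  rcases mem_absorbBlocks.1 hD' with ⟨hmem, _⟩ | rfl
  · exact hxz D' hmem
  · exact ⟨E, hE, hN⟩

/-- `z` is obtained from `x` by merging two non-zero, non-opposite blocks. -/
def IsMergeOf (x z : SignedPartition n) : Prop :=
  ∃ (B C : Finset ℤ) (hB : B ∈ x.blocks) (hC : C ∈ x.blocks) (h0B : (0 : ℤ) ∉ B)
    (h0C : (0 : ℤ) ∉ C) (hCB : C ≠ B) (hCnB : C ≠ negS B),
    z = mergeSP x B C hB hC h0B h0C hCB hCnB

/-- `z` is obtained from `x` by absorbing a non-zero block and its negative into the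
zero block. -/
def IsAbsorbOf (x z : SignedPartition n) : Prop :=
  ∃ (B : Finset ℤ) (hB : B ∈ x.blocks) (h0B : (0 : ℤ) ∉ B), z = absorbSP x B hB h0B

theorem covby_cases {x z : SignedPartition n} (h : covby x z) :
    IsMergeOf x z ∨ IsAbsorbOf x z := by
  obtain ⟨hlt, hmin⟩ := h
  obtain ⟨E, hE, B1, hB1, B2, hB2, hne, hsub1, hsub2⟩ := two_blocks hlt
  have hxz := hlt.1
  have conclude : ∀ w : SignedPartition n, lt x w → le w z → z = w := by
    intro w hxw hwz
    have h' := hmin w hxw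
    rw [lt] at h'
    push_neg at h'
    exact le_antisymm (h' hwz) hwz
  by_cases h01 : (0 : ℤ) ∈ B1 <;> by_cases h02 : (0 : ℤ) ∈ B2
  · exact absurd ((eq_zblk hB1 h01).trans (eq_zblk hB2 h02).symm) hne
  · right
    refine ⟨B2, hB2, h02, conclude _ lt_absorbSP (le_absorb_of_subset hxz hE ?_)⟩
    have h0E : (0 : ℤ) ∈ E := hsub1 h01
    have hZ : x.zblk ⊆ E := zblk_subset_of_le hxz hE h0E
    have hnB : negS B2 ⊆ E := by
      have := negS_subset hsub2
      rwa [negS_eq_self_of_zero_mem hE h0E] at this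
    exact Finset.union_subset (Finset.union_subset hZ hsub2) hnB
  · right
    refine ⟨B1, hB1, h01, conclude _ lt_absorbSP (le_absorb_of_subset hxz hE ?_)⟩
    have h0E : (0 : ℤ) ∈ E := hsub2 h02
    have hZ : x.zblk ⊆ E := zblk_subset_of_le hxz hE h0E
    have hnB : negS B1 ⊆ E := by
      have := negS_subset hsub1
      rwa [negS_eq_self_of_zero_mem hE h0E] at this
    exact Finset.union_subset (Finset.union_subset hZ hsub1) hnB
  · by_cases hneg : B2 = negS B1
    · right
      refine ⟨B1, hB1, h01, conclude _ lt_absorbSP (le_absorb_of_subset hxz hE ?_)⟩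
      rcases x.nonempty_blocks B1 hB1 with ⟨a, ha⟩
      have ha0 : a ≠ 0 := fun h' => h01 (h' ▸ ha)
      have hnB : negS B1 ⊆ E := hneg ▸ hsub2
      have h0E : (0 : ℤ) ∈ E :=
        zero_mem_of_pair hE (hsub1 ha) (hnB (by simpa using ha)) ha0
      exact Finset.union_subset
        (Finset.union_subset (zblk_subset_of_le hxz hE h0E) hsub1) hnB
    · left
      exact ⟨B1, B2, hB1, hB2, h01, h02, hne.symm, hneg,
        conclude _ lt_mergeSP
          (le_merge_of_subset hxz hE (Finset.union_subset hsub1 hsub2))⟩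

theorem maxMinLabel_mergeSP {x : SignedPartition n} {B C : Finset ℤ} {hB : B ∈ x.blocks}
    {hC : C ∈ x.blocks} {h0B : (0 : ℤ) ∉ B} {h0C : (0 : ℤ) ∉ C} {hCB : C ≠ B}
    {hCnB : C ≠ negS B} {l : ℕ} :
    MaxMinLabel x (mergeSP x B C hB hC h0B h0C hCB hCnB) l ↔ l = max (amin B) (amin C) := by
  constructor
  · rintro ⟨B₁, hB₁, B₂, hB₂, hne, h0₁, h0₂, ⟨D, hD, hs1, hs2⟩, m₁, m₂, ha₁, ha₂, rfl⟩
    rcases mem_mergeBlocks.1 hD with ⟨hD1, _⟩ | rfl | rfl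
    · exfalso
      rcases x.nonempty_blocks B₁ hB₁ with ⟨a, ha⟩
      rcases x.nonempty_blocks B₂ hB₂ with ⟨b, hb⟩
      exact hne ((eq_of_mem_mem hB₁ hD1 ha (hs1 ha)).trans
        (eq_of_mem_mem hB₂ hD1 hb (hs2 hb)).symm)
    · rw [absMin_eq_amin ha₁, absMin_eq_amin ha₂]
      rcases block_eq_of_subset_union hB₁ hB hC hs1 with rfl | rfl <;>
        rcases block_eq_of_subset_union hB₂ hB hC hs2 with rfl | rfl
      · exact absurd rfl hne
      · rfl
      · exact Nat.max_comm _ _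
      · exact absurd rfl hne
    · rw [absMin_eq_amin ha₁, absMin_eq_amin ha₂]
      rw [negS_union] at hs1 hs2
      rcases block_eq_of_subset_union hB₁ (negS_mem hB) (negS_mem hC) hs1 with rfl | rfl <;>
        rcases block_eq_of_subset_union hB₂ (negS_mem hB) (negS_mem hC) hs2 with rfl | rfl
      · exact absurd rfl hne
      · rw [amin_negS, amin_negS]
      · rw [amin_negS, amin_negS]; exact Nat.max_comm _ _
      · exact absurd rfl hne
  · rintro rfl
    refine ⟨B, hB, C, hC, fun h => hCB h.symm, h0B, h0C,
      ⟨B ∪ C, mem_mergeBlocks.2 (Or.inr (Or.inl rfl)),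
        Finset.subset_union_left, Finset.subset_union_right⟩,
      amin B, amin C, absMin_amin (x.nonempty_blocks B hB),
      absMin_amin (x.nonempty_blocks C hC), rfl⟩

theorem maxMinLabel_absorbSP {x : SignedPartition n} {B : Finset ℤ} {hB : B ∈ x.blocks}
    {h0B : (0 : ℤ) ∉ B} {l : ℕ} :
    MaxMinLabel x (absorbSP x B hB h0B) l ↔ l = amin B := by
  have h0nB : (0 : ℤ) ∉ negS B := fun h => h0B (by simpa using h)
  constructor
  · rintro ⟨B₁, hB₁, B₂, hB₂, hne, h0₁, h0₂, ⟨D, hD, hs1, hs2⟩, m₁, m₂, ha₁, ha₂, rfl⟩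
    rcases mem_absorbBlocks.1 hD with ⟨hD1, _⟩ | rfl
    · exfalso
      rcases x.nonempty_blocks B₁ hB₁ with ⟨a, ha⟩
      rcases x.nonempty_blocks B₂ hB₂ with ⟨b, hb⟩
      exact hne ((eq_of_mem_mem hB₁ hD1 ha (hs1 ha)).trans
        (eq_of_mem_mem hB₂ hD1 hb (hs2 hb)).symm)
    · rw [absMin_eq_amin ha₁, absMin_eq_amin ha₂]
      have e1 := block_eq_of_subset_union3 hB₁ x.zblk_mem hB (negS_mem hB) hs1
      have e2 := block_eq_of_subset_union3 hB₂ x.zblk_mem hB (negS_mem hB) hs2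
      rcases e1 with rfl | rfl | rfl
      · exact absurd x.zero_mem_zblk h0₁
      · rcases e2 with rfl | rfl | rfl
        · exact absurd x.zero_mem_zblk h0₂
        · exact absurd rfl hne
        · rw [amin_negS]; exact Nat.max_self _
      · rcases e2 with rfl | rfl | rfl
        · exact absurd x.zero_mem_zblk h0₂
        · rw [amin_negS]; exact Nat.max_self _
        · exact absurd rfl hne
  · rintro rfl
    refine ⟨B, hB, negS B, negS_mem hB, ne_negS_self hB h0B, h0B, h0nB,
      ⟨x.zblk ∪ B ∪ negS B, mem_absorbBlocks.2 (Or.inr rfl), ?_, Finset.subset_union_right⟩,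
      amin B, amin (negS B), absMin_amin (x.nonempty_blocks B hB),
      absMin_amin (negS_nonempty (x.nonempty_blocks B hB)), ?_⟩
    · exact fun a ha => Finset.mem_union_left _ (Finset.mem_union_right _ ha)
    · rw [amin_negS, Nat.max_self]

theorem covby_label_exists {x z : SignedPartition n} (h : covby x z) :
    ∃ l, MaxMinLabel x z l := by
  rcases covby_cases h with ⟨B, C, hB, hC, h0B, h0C, hCB, hCnB, rfl⟩ | ⟨B, hB, h0B, rfl⟩
  · exact ⟨_, maxMinLabel_mergeSP.2 rfl⟩
  · exact ⟨_, maxMinLabel_absorbSP.2 rfl⟩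

theorem label_unique {x z : SignedPartition n} (h : covby x z) {l l' : ℕ}
    (h1 : MaxMinLabel x z l) (h2 : MaxMinLabel x z l') : l = l' := by
  rcases covby_cases h with ⟨B, C, hB, hC, h0B, h0C, hCB, hCnB, rfl⟩ | ⟨B, hB, h0B, rfl⟩
  · rw [maxMinLabel_mergeSP.1 h1, maxMinLabel_mergeSP.1 h2]
  · rw [maxMinLabel_absorbSP.1 h1, maxMinLabel_absorbSP.1 h2]

end SignedPartition
namespace SignedPartition

variable {n : ℕ}

theorem mergeBlocks_comm (x : SignedPartition n) (B C : Finset ℤ) :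
    mergeBlocks x B C = mergeBlocks x C B := by
  ext D
  rw [mem_mergeBlocks, mem_mergeBlocks, Finset.union_comm B C]
  tauto

theorem mergeBlocks_negS (x : SignedPartition n) (B C : Finset ℤ) :
    mergeBlocks x (negS B) (negS C) = mergeBlocks x B C := by
  ext D
  rw [mem_mergeBlocks, mem_mergeBlocks, ← negS_union, negS_negS, negS_negS, negS_negS]
  tauto

theorem absorbBlocks_negS (x : SignedPartition n) (B : Finset ℤ) :
    absorbBlocks x (negS B) = absorbBlocks x B := by
  have hu : x.zblk ∪ negS B ∪ B = x.zblk ∪ B ∪ negS B := by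
    ext a
    simp only [Finset.mem_union]
    tauto
  ext D
  rw [mem_absorbBlocks, mem_absorbBlocks, negS_negS, hu]
  tauto

/-- Every cover is a merge (with the lower min-abs-value block first) or an absorption. -/
theorem covby_cases' {x z : SignedPartition n} (h : covby x z) :
    (∃ (B C : Finset ℤ) (hB : B ∈ x.blocks) (hC : C ∈ x.blocks) (h0B : (0 : ℤ) ∉ B)
      (h0C : (0 : ℤ) ∉ C) (hCB : C ≠ B) (hCnB : C ≠ negS B),
      amin B < amin C ∧ z = mergeSP x B C hB hC h0B h0C hCB hCnB) ∨ IsAbsorbOf x z := by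
  rcases covby_cases h with ⟨B, C, hB, hC, h0B, h0C, hCB, hCnB, rfl⟩ | habs
  · left
    have hne := amin_ne hB hC hCB hCnB
    rcases Nat.lt_or_ge (amin B) (amin C) with hlt | hge
    · exact ⟨B, C, hB, hC, h0B, h0C, hCB, hCnB, hlt, rfl⟩
    · have hBC : B ≠ C := fun h' => hCB h'.symm
      have hBnC : B ≠ negS C := by
        intro h'
        apply hCnB
        rw [h', negS_negS]
      refine ⟨C, B, hC, hB, h0C, h0B, hBC, hBnC, by omega, ?_⟩
      exact ext' (mergeBlocks_comm x B C)
  · exact Or.inr habs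

/-- The set of labels of covers of `x` that lie below `y`. -/
def CoverLabels (x y : SignedPartition n) : Set ℕ :=
  {l | ∃ z, covby x z ∧ le z y ∧ MaxMinLabel x z l}

/-- The minimum cover label in the interval `[x, y]`. -/
noncomputable def MCL (x y : SignedPartition n) : ℕ := sInf (CoverLabels x y)

theorem merge_le_extract {x y : SignedPartition n} {B C : Finset ℤ} {hB : B ∈ x.blocks}
    {hC : C ∈ x.blocks} {h0B : (0 : ℤ) ∉ B} {h0C : (0 : ℤ) ∉ C} {hCB : C ≠ B}
    {hCnB : C ≠ negS B} (h : le (mergeSP x B C hB hC h0B h0C hCB hCnB) y) :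
    ∃ D ∈ y.blocks, B ∪ C ⊆ D :=
  h (B ∪ C) (mem_mergeBlocks.2 (Or.inr (Or.inl rfl)))

theorem absorb_le_extract {x y : SignedPartition n} {B : Finset ℤ} {hB : B ∈ x.blocks}
    {h0B : (0 : ℤ) ∉ B} (h : le (absorbSP x B hB h0B) y) :
    x.zblk ∪ B ∪ negS B ⊆ y.zblk := by
  rcases h (x.zblk ∪ B ∪ negS B) (mem_absorbBlocks.2 (Or.inr rfl)) with ⟨D, hD, hsub⟩
  have h0D : (0 : ℤ) ∈ D :=
    hsub (Finset.mem_union_left _ (Finset.mem_union_left _ x.zero_mem_zblk))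
  rwa [eq_zblk hD h0D] at hsub

theorem mem_CoverLabels_merge {x y : SignedPartition n} (hxy : le x y) {B C : Finset ℤ}
    (hB : B ∈ x.blocks) (hC : C ∈ x.blocks) (h0B : (0 : ℤ) ∉ B) (h0C : (0 : ℤ) ∉ C)
    (hCB : C ≠ B) (hCnB : C ≠ negS B) {D : Finset ℤ} (hD : D ∈ y.blocks)
    (hsub : B ∪ C ⊆ D) : max (amin B) (amin C) ∈ CoverLabels x y :=
  ⟨mergeSP x B C hB hC h0B h0C hCB hCnB, covby_mergeSP,
    le_merge_of_subset hxy hD hsub, maxMinLabel_mergeSP.2 rfl⟩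

theorem mem_CoverLabels_absorb {x y : SignedPartition n} (hxy : le x y) {B : Finset ℤ}
    (hB : B ∈ x.blocks) (h0B : (0 : ℤ) ∉ B) (hsub : B ⊆ y.zblk) :
    amin B ∈ CoverLabels x y := by
  refine ⟨absorbSP x B hB h0B, covby_absorbSP, le_absorb_of_subset hxy y.zblk_mem ?_,
    maxMinLabel_absorbSP.2 rfl⟩
  have h1 : x.zblk ⊆ y.zblk := zblk_subset_of_le hxy y.zblk_mem y.zero_mem_zblk
  have h2 : negS B ⊆ y.zblk := by
    have := negS_subset hsub
    rwa [negS_zblk] at this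
  exact Finset.union_subset (Finset.union_subset h1 hsub) h2

theorem exists_cover_le {x y : SignedPartition n} (h : lt x y) :
    (CoverLabels x y).Nonempty := by
  obtain ⟨E, hE, B1, hB1, B2, hB2, hne, hsub1, hsub2⟩ := two_blocks h
  have hxy := h.1
  by_cases h01 : (0 : ℤ) ∈ B1 <;> by_cases h02 : (0 : ℤ) ∈ B2
  · exact absurd ((eq_zblk hB1 h01).trans (eq_zblk hB2 h02).symm) hne
  · have hEz : E = y.zblk := eq_zblk hE (hsub1 h01)
    exact ⟨_, mem_CoverLabels_absorb hxy hB2 h02 (hEz ▸ hsub2)⟩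
  · have hEz : E = y.zblk := eq_zblk hE (hsub2 h02)
    exact ⟨_, mem_CoverLabels_absorb hxy hB1 h01 (hEz ▸ hsub1)⟩
  · by_cases hneg : B2 = negS B1
    · rcases x.nonempty_blocks B1 hB1 with ⟨a, ha⟩
      have ha0 : a ≠ 0 := fun h' => h01 (h' ▸ ha)
      have h0E : (0 : ℤ) ∈ E :=
        zero_mem_of_pair hE (hsub1 ha) ((hneg ▸ hsub2) (by simpa using ha)) ha0
      have hEz : E = y.zblk := eq_zblk hE h0E
      exact ⟨_, mem_CoverLabels_absorb hxy hB1 h01 (hEz ▸ hsub1)⟩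
    · exact ⟨_, mem_CoverLabels_merge hxy hB1 hB2 h01 h02 hne.symm hneg hE
        (Finset.union_subset hsub1 hsub2)⟩

theorem MCL_mem {x y : SignedPartition n} (h : lt x y) : MCL x y ∈ CoverLabels x y :=
  Nat.sInf_mem (exists_cover_le h)

theorem MCL_le {x y : SignedPartition n} {l : ℕ} (h : l ∈ CoverLabels x y) : MCL x y ≤ l :=
  Nat.sInf_le h

/-- Uniqueness of the cover attaining the minimal label. -/
theorem min_cover_unique {x y z1 z2 : SignedPartition n}
    (h1c : covby x z1) (h1y : le z1 y) (h1l : MaxMinLabel x z1 (MCL x y))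
    (h2c : covby x z2) (h2y : le z2 y) (h2l : MaxMinLabel x z2 (MCL x y)) : z1 = z2 := by
  by_contra hne
  set m := MCL x y with hm
  have hxy : le x y := le_trans h1c.1.1 h1y
  suffices hsm : ∃ l ∈ CoverLabels x y, l < m by
    rcases hsm with ⟨l, hl, hlm⟩
    exact absurd (MCL_le hl) (by omega)
  -- helper for the mixed case
  have mixed : ∀ zM zA : SignedPartition n,
      (∃ (B C : Finset ℤ) (hB : B ∈ x.blocks) (hC : C ∈ x.blocks) (h0B : (0 : ℤ) ∉ B)
        (h0C : (0 : ℤ) ∉ C) (hCB : C ≠ B) (hCnB : C ≠ negS B),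
        amin B < amin C ∧ zM = mergeSP x B C hB hC h0B h0C hCB hCnB) →
      IsAbsorbOf x zA → le zM y → le zA y →
      MaxMinLabel x zM m → MaxMinLabel x zA m → ∃ l ∈ CoverLabels x y, l < m := by
    rintro zM zA ⟨B, C, hB, hC, h0B, h0C, hCB, hCnB, hBC, rfl⟩ ⟨E, hE, h0E, rfl⟩
      hMy hAy hMl hAl
    have hmM : m = amin C := by
      have := maxMinLabel_mergeSP.1 hMl
      omega
    have hmA : m = amin E := maxMinLabel_absorbSP.1 hAl
    -- E ∈ {C, negS C}
    rcases amin_mem (x.nonempty_blocks C hC) with ⟨v, hv, hv'⟩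
    rcases amin_mem (x.nonempty_blocks E hE) with ⟨w, hw, hw'⟩
    have hEC : E = C ∨ E = negS C :=
      eq_or_negS_of_abs_eq hC hE hv hw (by omega)
    have hEsub := absorb_le_extract hAy
    have hCz : C ⊆ y.zblk := by
      rcases hEC with rfl | rfl
      · exact fun a ha =>
          hEsub (Finset.mem_union_left _ (Finset.mem_union_right _ ha))
      · intro a ha
        exact hEsub (Finset.mem_union_right _ (by simpa using ha))
    rcases merge_le_extract hMy with ⟨D, hD, hsubD⟩
    rcases x.nonempty_blocks C hC with ⟨c, hc⟩
    have hDz : D = y.zblk :=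
      eq_of_mem_mem hD y.zblk_mem (hsubD (Finset.mem_union_right _ hc)) (hCz hc)
    have hBz : B ⊆ y.zblk := hDz ▸ fun a ha => hsubD (Finset.mem_union_left _ ha)
    exact ⟨amin B, mem_CoverLabels_absorb hxy hB h0B hBz, by omega⟩
  rcases covby_cases' h1c with hm1 | ha1 <;> rcases covby_cases' h2c with hm2 | ha2
  · -- both merges
    obtain ⟨B, C, hB, hC, h0B, h0C, hCB, hCnB, hBC, rfl⟩ := hm1
    obtain ⟨E, F, hEm, hFm, h0Em, h0Fm, hFE, hFnE, hEF, hz2⟩ := hm2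
    have hm1' : m = amin C := by have := maxMinLabel_mergeSP.1 h1l; omega
    have hm2' : m = amin F := by
      rw [hz2] at h2l
      have := maxMinLabel_mergeSP.1 h2l
      omega
    rcases amin_mem (x.nonempty_blocks C hC) with ⟨v, hv, hv'⟩
    rcases amin_mem (x.nonempty_blocks F hFm) with ⟨w, hw, hw'⟩
    have hFC : F = C ∨ F = negS C := eq_or_negS_of_abs_eq hC hFm hv hw (by omega)
    have core : ∀ (E' : Finset ℤ), E' ∈ x.blocks → (0 : ℤ) ∉ E' → E' ≠ B →
        amin E' < amin C → (∃ D ∈ y.blocks, E' ∪ C ⊆ D) →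
        ∃ l ∈ CoverLabels x y, l < m := by
      intro E' hE'm h0E' hE'B hE'amin ⟨D2, hD2, hsub2⟩
      rcases merge_le_extract h1y with ⟨D, hD, hsubD⟩
      rcases x.nonempty_blocks C hC with ⟨c, hc⟩
      have hDD2 : D = D2 := eq_of_mem_mem hD hD2
        (hsubD (Finset.mem_union_right _ hc)) (hsub2 (Finset.mem_union_right _ hc))
      by_cases hEnegB : E' = negS B
      · -- B and negS B both inside D, so D is the zero block of y
        rcases x.nonempty_blocks B hB with ⟨a, ha⟩
        have ha0 : a ≠ 0 := fun h' => h0B (h' ▸ ha)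
        have haD : a ∈ D := hsubD (Finset.mem_union_left _ ha)
        have hnaD : -a ∈ D := by
          rw [hDD2]
          exact hsub2 (Finset.mem_union_left _ (hEnegB ▸ (by simpa using ha)))
        have h0D : (0 : ℤ) ∈ D := zero_mem_of_pair hD haD hnaD ha0
        have hDz : D = y.zblk := eq_zblk hD h0D
        have hBz : B ⊆ y.zblk := hDz ▸ fun a' ha' => hsubD (Finset.mem_union_left _ ha')
        exact ⟨amin B, mem_CoverLabels_absorb hxy hB h0B hBz, by omega⟩
      · -- merge B with E' : smaller label
        have hsubBE : B ∪ E' ⊆ D := by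
          refine Finset.union_subset (fun a' ha' => hsubD (Finset.mem_union_left _ ha'))
            (fun a' ha' => ?_)
          rw [hDD2]
          exact hsub2 (Finset.mem_union_left _ ha')
        exact ⟨max (amin B) (amin E'),
          mem_CoverLabels_merge hxy hB hE'm h0B h0E' hE'B hEnegB hD hsubBE, by omega⟩
    rcases hFC with hFC | hFC
    · -- F = C
      have hEB : E ≠ B := by
        intro h'
        apply hne
        apply ext'
        show mergeBlocks x B C = z2.blocks
        rw [hz2]
        show mergeBlocks x B C = mergeBlocks x E F
        rw [h', hFC]
      refine core E hEm h0Em hEB (by rw [← hFC]; exact hEF) ?_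
      rcases merge_le_extract (hz2 ▸ h2y) with ⟨D0, hD0, hs⟩
      rw [hFC] at hs
      exact ⟨D0, hD0, hs⟩
    · -- F = negS C
      have key : mergeBlocks x (negS E) C = mergeBlocks x E (negS C) := by
        have := mergeBlocks_negS x E (negS C)
        rwa [negS_negS] at this
      have hEB : negS E ≠ B := by
        intro h'
        apply hne
        apply ext'
        show mergeBlocks x B C = z2.blocks
        rw [hz2]
        show mergeBlocks x B C = mergeBlocks x E F
        rw [hFC, ← key, h']
      have hamin : amin (negS E) < amin C := by
        have h1 := amin_negS E
        have h2 := amin_negS C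
        rw [hFC] at hEF
        omega
      refine core (negS E) (negS_mem hEm) (fun h' => h0Em (by simpa using h'))
        hEB hamin ?_
      rcases merge_le_extract (hz2 ▸ h2y) with ⟨D0, hD0, hs⟩
      rw [hFC] at hs
      refine ⟨negS D0, negS_mem hD0, ?_⟩
      have := negS_subset hs
      rwa [negS_union, negS_negS] at this
  · exact mixed z1 z2 hm1 ha2 h1y h2y h1l h2l
  · rcases mixed z2 z1 hm2 ha1 h2y h1y h2l h1l with ⟨l, hl, hlm⟩
    exact ⟨l, hl, hlm⟩
  · -- both absorbs
    obtain ⟨B, hB, h0B, rfl⟩ := ha1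
    obtain ⟨E, hE, h0E, rfl⟩ := ha2
    have hm1' : m = amin B := maxMinLabel_absorbSP.1 h1l
    have hm2' : m = amin E := maxMinLabel_absorbSP.1 h2l
    rcases amin_mem (x.nonempty_blocks B hB) with ⟨v, hv, hv'⟩
    rcases amin_mem (x.nonempty_blocks E hE) with ⟨w, hw, hw'⟩
    rcases eq_or_negS_of_abs_eq hB hE hv hw (by omega) with rfl | rfl
    · exact absurd rfl hne
    · exact absurd (ext' (absorbBlocks_negS x B).symm) hne

end SignedPartition
namespace SignedPartition

variable {n : ℕ}

theorem not_mem_mergeBlocks_right {x : SignedPartition n} {G H : Finset ℤ}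
    (hG : G ∈ x.blocks) (hH : H ∈ x.blocks) (hHG : H ≠ G) (hHnG : H ≠ negS G) :
    H ∉ mergeBlocks x G H := by
  intro h
  rcases x.nonempty_blocks G hG with ⟨a, ha⟩
  rcases mem_mergeBlocks.1 h with ⟨_, _, h2, _, _⟩ | h2 | h2
  · exact h2 rfl
  · have hGH : G ⊆ H := h2 ▸ Finset.subset_union_left
    exact hHG (eq_of_mem_mem hH hG (hGH ha) ha)
  · rw [negS_union] at h2
    have hGH : negS G ⊆ H := h2 ▸ Finset.subset_union_left
    have hma : -a ∈ negS G := by simpa using ha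
    exact hHnG (eq_of_mem_mem hH (negS_mem hG) (hGH hma) hma)

theorem not_mem_absorbBlocks_self {x : SignedPartition n} {G : Finset ℤ}
    (h0G : (0 : ℤ) ∉ G) : G ∉ absorbBlocks x G := by
  intro h
  rcases mem_absorbBlocks.1 h with ⟨_, _, h2, _⟩ | h2
  · exact h2 rfl
  · apply h0G
    rw [h2]
    exact Finset.mem_union_left _ (Finset.mem_union_left _ x.zero_mem_zblk)

/-- If `z` is the minimal-label cover in `[x,y]`, any legal merge of two old blocks,
one of which is still a block of `z`, has label `> MCL x y`. -/
theorem m_lt_of_merge_cover {x y z : SignedPartition n} (hzc : covby x z) (hzy : le z y)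
    (hzl : MaxMinLabel x z (MCL x y)) {G H : Finset ℤ} (hG : G ∈ x.blocks)
    (hH : H ∈ x.blocks) (h0G : (0 : ℤ) ∉ G) (h0H : (0 : ℤ) ∉ H) (hHG : H ≠ G)
    (hHnG : H ≠ negS G) {D : Finset ℤ} (hD : D ∈ y.blocks) (hsub : G ∪ H ⊆ D)
    (hHz : H ∈ z.blocks) : MCL x y < max (amin G) (amin H) := by
  have hxy : le x y := le_trans hzc.1.1 hzy
  have hmem : max (amin G) (amin H) ∈ CoverLabels x y :=
    mem_CoverLabels_merge hxy hG hH h0G h0H hHG hHnG hD hsub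
  rcases Nat.lt_or_ge (MCL x y) (max (amin G) (amin H)) with h | h
  · exact h
  have heq : MCL x y = max (amin G) (amin H) := Nat.le_antisymm (MCL_le hmem) h
  exfalso
  have hzv : z = mergeSP x G H hG hH h0G h0H hHG hHnG :=
    min_cover_unique hzc hzy hzl covby_mergeSP (le_merge_of_subset hxy hD hsub)
      (maxMinLabel_mergeSP.2 heq)
  rw [hzv] at hHz
  exact not_mem_mergeBlocks_right hG hH hHG hHnG hHz

/-- If `z` is the minimal-label cover in `[x,y]`, any legal absorption of an old block
that is still a block of `z` has label `> MCL x y`. -/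
theorem m_lt_of_absorb_cover {x y z : SignedPartition n} (hzc : covby x z) (hzy : le z y)
    (hzl : MaxMinLabel x z (MCL x y)) {G : Finset ℤ} (hG : G ∈ x.blocks)
    (h0G : (0 : ℤ) ∉ G) (hsub : G ⊆ y.zblk) (hGz : G ∈ z.blocks) :
    MCL x y < amin G := by
  have hxy : le x y := le_trans hzc.1.1 hzy
  have hmem : amin G ∈ CoverLabels x y := mem_CoverLabels_absorb hxy hG h0G hsub
  rcases Nat.lt_or_ge (MCL x y) (amin G) with h | h
  · exact h
  have heq : MCL x y = amin G := Nat.le_antisymm (MCL_le hmem) h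
  exfalso
  have h1 : x.zblk ⊆ y.zblk := zblk_subset_of_le hxy y.zblk_mem y.zero_mem_zblk
  have h2 : negS G ⊆ y.zblk := by
    have := negS_subset hsub
    rwa [negS_zblk] at this
  have hzv : z = absorbSP x G hG h0G :=
    min_cover_unique hzc hzy hzl covby_absorbSP
      (le_absorb_of_subset hxy y.zblk_mem
        (Finset.union_subset (Finset.union_subset h1 hsub) h2))
      (maxMinLabel_absorbSP.2 heq)
  rw [hzv] at hGz
  exact not_mem_absorbBlocks_self h0G hGz

end SignedPartition
namespace SignedPartition

variable {n : ℕ}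

/-- Key lemma: if `z` is the minimal-label cover in the interval `[x,y]`, then every
label of a cover of `z` below `y` is strictly larger than `MCL x y`. -/
theorem MCL_lt_of_coverLabel {x y z : SignedPartition n} (hzc : covby x z) (hzy : le z y)
    (hzl : MaxMinLabel x z (MCL x y)) {l : ℕ} (hl : l ∈ CoverLabels z y) : MCL x y < l := by
  obtain ⟨w, hwc, hwy, hwl⟩ := hl
  have hxy : le x y := le_trans hzc.1.1 hzy
  rcases covby_cases' hzc with
    ⟨B, C, hB, hC, h0B, h0C, hCB, hCnB, hBC, hzeq⟩ | ⟨B, hB, h0B, hzeq⟩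
  · -- z is the merge of B and C, amin B < amin C, MCL x y = amin C
    have hm : MCL x y = amin C := by
      rw [hzeq] at hzl
      have := maxMinLabel_mergeSP.1 hzl
      omega
    have haminBC : amin (B ∪ C) = amin B := by
      rw [amin_union (x.nonempty_blocks B hB) (x.nonempty_blocks C hC)]
      omega
    have hCzblk : C ⊆ y.zblk → False := by
      intro hCsub
      have hzv : z = absorbSP x C hC h0C := by
        have h1 : x.zblk ⊆ y.zblk := zblk_subset_of_le hxy y.zblk_mem y.zero_mem_zblk
        have h2 : negS C ⊆ y.zblk := by
          have := negS_subset hCsub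
          rwa [negS_zblk] at this
        exact min_cover_unique hzc hzy hzl covby_absorbSP
          (le_absorb_of_subset hxy y.zblk_mem
            (Finset.union_subset (Finset.union_subset h1 hCsub) h2))
          (maxMinLabel_absorbSP.2 hm)
      have hzmem : x.zblk ∈ z.blocks := by
        rw [hzeq]
        refine mem_mergeBlocks.2 (Or.inl ⟨x.zblk_mem, ?_, ?_, ?_, ?_⟩)
        · intro h'; exact h0B (h' ▸ x.zero_mem_zblk)
        · intro h'; exact h0C (h' ▸ x.zero_mem_zblk)
        · intro h'; exact h0B (by simpa using (h' ▸ x.zero_mem_zblk : (0:ℤ) ∈ negS B))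
        · intro h'; exact h0C (by simpa using (h' ▸ x.zero_mem_zblk : (0:ℤ) ∈ negS C))
      rw [hzv] at hzmem
      rcases mem_absorbBlocks.1 hzmem with ⟨_, h', _, _⟩ | h'
      · exact h' rfl
      · rcases x.nonempty_blocks C hC with ⟨c, hc⟩
        have hcz : c ∈ x.zblk := by
          rw [h']
          exact Finset.mem_union_left _ (Finset.mem_union_right _ hc)
        exact h0C ((eq_of_mem_mem hC x.zblk_mem hc hcz) ▸ x.zero_mem_zblk)
    rcases covby_cases' hwc with
      ⟨E, F, hEz, hFz, h0E, h0F, hFE, hFnE, hEF, hweq⟩ | ⟨E, hEz, h0E, hweq⟩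
    · -- w is a merge of z-blocks E, F with amin E < amin F
      have hlv : l = max (amin E) (amin F) := by
        rw [hweq] at hwl
        exact maxMinLabel_mergeSP.1 hwl
      obtain ⟨D, hD, hsub⟩ := merge_le_extract (hweq ▸ hwy)
      have hEsubD : E ⊆ D := fun a ha => hsub (Finset.mem_union_left _ ha)
      have hFsubD : F ⊆ D := fun a ha => hsub (Finset.mem_union_right _ ha)
      have hEz' : E ∈ mergeBlocks x B C := by rw [hzeq] at hEz; exact hEz
      have hFz' : F ∈ mergeBlocks x B C := by rw [hzeq] at hFz; exact hFz
      rcases mem_mergeBlocks.1 hEz' with ⟨hEx, hEB, hEC, hEnB, hEnC⟩ | hEnew | hEnew <;>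
        rcases mem_mergeBlocks.1 hFz' with ⟨hFx, hFB, hFC, hFnB, hFnC⟩ | hFnew | hFnew
      · -- both old
        have := m_lt_of_merge_cover hzc hzy hzl hEx hFx h0E h0F hFE hFnE hD
          (Finset.union_subset hEsubD hFsubD) hFz
        omega
      · -- E old, F = B ∪ C
        have hBD : B ⊆ D := fun a ha => hFsubD (hFnew ▸ Finset.mem_union_left _ ha)
        have := m_lt_of_merge_cover hzc hzy hzl hB hEx h0B h0E hEB hEnB hD
          (Finset.union_subset hBD hEsubD) hEz
        rw [hlv, hFnew, haminBC]
        omega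
      · -- E old, F = negS (B ∪ C)
        have hnEz : negS E ∈ z.blocks := negS_mem hEz
        have hnEx : negS E ∈ x.blocks := negS_mem hEx
        have h0nE : (0 : ℤ) ∉ negS E := fun h' => h0E (by simpa using h')
        have hnEB : negS E ≠ B := by
          intro h'; exact hEnB (by rw [← h', negS_negS])
        have hnEnB : negS E ≠ negS B := by
          intro h'; exact hEB (by simpa using congrArg negS h')
        have hBnD : B ⊆ negS D := by
          intro a ha
          rw [mem_negS]
          apply hFsubD
          rw [hFnew, mem_negS]
          simpa using Finset.mem_union_left C ha
        have hnED : negS E ⊆ negS D := negS_subset hEsubD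
        have := m_lt_of_merge_cover hzc hzy hzl hB hnEx h0B h0nE hnEB hnEnB
          (negS_mem hD) (Finset.union_subset hBnD hnED) hnEz
        have e1 : amin (negS E) = amin E := amin_negS E
        have e2 : amin F = amin B := by rw [hFnew, amin_negS, haminBC]
        omega
      · -- E = B ∪ C, F old
        have hBD : B ⊆ D := fun a ha => hEsubD (hEnew ▸ Finset.mem_union_left _ ha)
        have := m_lt_of_merge_cover hzc hzy hzl hB hFx h0B h0F hFB hFnB hD
          (Finset.union_subset hBD hFsubD) hFz
        rw [hlv, hEnew, haminBC]
        omega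
      · exact absurd (hFnew.trans hEnew.symm) hFE
      · exact absurd (by rw [hFnew, hEnew]) hFnE
      · -- E = negS (B ∪ C), F old
        have hnFz : negS F ∈ z.blocks := negS_mem hFz
        have hnFx : negS F ∈ x.blocks := negS_mem hFx
        have h0nF : (0 : ℤ) ∉ negS F := fun h' => h0F (by simpa using h')
        have hnFB : negS F ≠ B := by
          intro h'; exact hFnB (by rw [← h', negS_negS])
        have hnFnB : negS F ≠ negS B := by
          intro h'; exact hFB (by simpa using congrArg negS h')
        have hBnD : B ⊆ negS D := by
          intro a ha
          rw [mem_negS]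
          apply hEsubD
          rw [hEnew, mem_negS]
          simpa using Finset.mem_union_left C ha
        have hnFD : negS F ⊆ negS D := negS_subset hFsubD
        have := m_lt_of_merge_cover hzc hzy hzl hB hnFx h0B h0nF hnFB hnFnB
          (negS_mem hD) (Finset.union_subset hBnD hnFD) hnFz
        have e1 : amin (negS F) = amin F := amin_negS F
        have e2 : amin E = amin B := by rw [hEnew, amin_negS, haminBC]
        omega
      · exact absurd (by rw [hFnew, hEnew, negS_negS]) hFnE
      · exact absurd (hFnew.trans hEnew.symm) hFE
    · -- w is an absorption of the z-block E
      have hlv : l = amin E := by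
        rw [hweq] at hwl
        exact maxMinLabel_absorbSP.1 hwl
      have hext := absorb_le_extract (hweq ▸ hwy)
      have hEsub : E ⊆ y.zblk := fun a ha =>
        hext (Finset.mem_union_left _ (Finset.mem_union_right _ ha))
      have hnEsub : negS E ⊆ y.zblk := fun a ha => hext (Finset.mem_union_right _ ha)
      have hEz' : E ∈ mergeBlocks x B C := by rw [hzeq] at hEz; exact hEz
      rcases mem_mergeBlocks.1 hEz' with ⟨hEx, hEB, hEC, hEnB, hEnC⟩ | hEnew | hEnew
      · have := m_lt_of_absorb_cover hzc hzy hzl hEx h0E hEsub hEz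
        omega
      · exact absurd (fun a ha => hEsub (hEnew ▸ Finset.mem_union_right _ ha)) 
          (fun h' => hCzblk h')
      · refine absurd ?_ (fun h' => hCzblk h')
        intro a ha
        apply hnEsub
        rw [hEnew, negS_negS]
        exact Finset.mem_union_right _ ha
  · -- z is the absorption of B, MCL x y = amin B
    rcases covby_cases' hwc with
      ⟨E, F, hEz, hFz, h0E, h0F, hFE, hFnE, hEF, hweq⟩ | ⟨E, hEz, h0E, hweq⟩
    · have hlv : l = max (amin E) (amin F) := by
        rw [hweq] at hwl
        exact maxMinLabel_mergeSP.1 hwl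
      obtain ⟨D, hD, hsub⟩ := merge_le_extract (hweq ▸ hwy)
      have hEz' : E ∈ absorbBlocks x B := by rw [hzeq] at hEz; exact hEz
      have hFz' : F ∈ absorbBlocks x B := by rw [hzeq] at hFz; exact hFz
      have h0N : (0 : ℤ) ∈ x.zblk ∪ B ∪ negS B :=
        Finset.mem_union_left _ (Finset.mem_union_left _ x.zero_mem_zblk)
      rcases mem_absorbBlocks.1 hEz' with ⟨hEx, _, _, _⟩ | hEnew
      · rcases mem_absorbBlocks.1 hFz' with ⟨hFx, _, _, _⟩ | hFnew
        · have := m_lt_of_merge_cover hzc hzy hzl hEx hFx h0E h0F hFE hFnE hD hsub hFz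
          omega
        · exact absurd (hFnew ▸ h0N) h0F
      · exact absurd (hEnew ▸ h0N) h0E
    · have hlv : l = amin E := by
        rw [hweq] at hwl
        exact maxMinLabel_absorbSP.1 hwl
      have hext := absorb_le_extract (hweq ▸ hwy)
      have hEsub : E ⊆ y.zblk := fun a ha =>
        hext (Finset.mem_union_left _ (Finset.mem_union_right _ ha))
      have hEz' : E ∈ absorbBlocks x B := by rw [hzeq] at hEz; exact hEz
      have h0N : (0 : ℤ) ∈ x.zblk ∪ B ∪ negS B :=
        Finset.mem_union_left _ (Finset.mem_union_left _ x.zero_mem_zblk)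
      rcases mem_absorbBlocks.1 hEz' with ⟨hEx, _, _, _⟩ | hEnew
      · have := m_lt_of_absorb_cover hzc hzy hzl hEx h0E hEsub hEz
        omega
      · exact absurd (hEnew ▸ h0N) h0E

end SignedPartition
namespace SignedPartition

variable {n : ℕ}

theorem chain_le : ∀ (c : List (SignedPartition n)) (u v : SignedPartition n),
    c.Chain' covby → c.head? = some u → c.getLast? = some v → le u v
  | [], _, _, _, hh, _ => by simp at hh
  | [w], u, v, _, hh, hl => by
    simp only [List.head?_cons, Option.some.injEq] at hh
    simp only [List.getLast?_singleton, Option.some.injEq] at hl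
    subst hh; subst hl
    exact le_refl _
  | w :: w' :: rest, u, v, hc, hh, hl => by
    simp only [List.head?_cons, Option.some.injEq] at hh
    subst hh
    have h1 := List.isChain_cons_cons.1 hc
    have h2 := chain_le (w' :: rest) w' v h1.2 rfl (by simpa using hl)
    exact le_trans h1.1.1.1 h2

/-- `a` and `b` lie in a common block of `u`. -/
def SameBlk (u : SignedPartition n) (a b : ℤ) : Prop := ∃ E ∈ u.blocks, a ∈ E ∧ b ∈ E

theorem exists_small_label_aux {y : SignedPartition n} {a b : ℤ}
    (ha : a ∈ Finset.Icc (-(n : ℤ)) (n : ℤ)) (hb : b ∈ Finset.Icc (-(n : ℤ)) (n : ℤ))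
    (hSy : SameBlk y a b)
    (H : ∀ u : SignedPartition n, le u y → ¬ SameBlk u a b →
      ∀ E ∈ u.blocks, a ∈ E ∨ b ∈ E → (0 : ℤ) ∉ E) :
    ∀ (c : List (SignedPartition n)) (ℓ : List ℕ) (u : SignedPartition n),
      c.Chain' covby → c.head? = some u → c.getLast? = some y → LabelSeq c ℓ →
      ¬ SameBlk u a b → ∃ l ∈ ℓ, l ≤ max a.natAbs b.natAbs
  | [], ℓ, u, _, hh, _, _, _ => by simp at hh
  | [w], ℓ, u, _, hh, hl, _, hSu => by
    simp only [List.head?_cons, Option.some.injEq] at hh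
    simp only [List.getLast?_singleton, Option.some.injEq] at hl
    subst hh; subst hl
    exact absurd hSy hSu
  | w :: w' :: rest, ℓ, u, hc, hh, hl, hLS, hSu => by
    simp only [List.head?_cons, Option.some.injEq] at hh
    subst hh
    have h1 := List.isChain_cons_cons.1 hc
    cases ℓ with
    | nil => simp only [LabelSeq] at hLS
    | cons l ls =>
      obtain ⟨hlab, hLS'⟩ := hLS
      have hlast : (w' :: rest).getLast? = some y := by simpa using hl
      by_cases hSv : SameBlk w' a b
      · -- the transition happens here
        obtain ⟨F, hF, haF, hbF⟩ := hSv
        obtain ⟨Ea, hEa, haEa⟩ := w.covers a ha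
        obtain ⟨Eb, hEb, hbEb⟩ := w.covers b hb
        have hne : Ea ≠ Eb := fun h' => hSu ⟨Ea, hEa, haEa, h' ▸ hbEb⟩
        have huy : le w y := chain_le (w :: w' :: rest) w y hc rfl hl
        have h0a : (0 : ℤ) ∉ Ea := H w huy hSu Ea hEa (Or.inl haEa)
        have h0b : (0 : ℤ) ∉ Eb := H w huy hSu Eb hEb (Or.inr hbEb)
        have hsa : Ea ⊆ F := subset_of_le h1.1.1.1 hEa hF haEa haF
        have hsb : Eb ⊆ F := subset_of_le h1.1.1.1 hEb hF hbEb hbF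
        have hml : MaxMinLabel w w' (max (amin Ea) (amin Eb)) :=
          ⟨Ea, hEa, Eb, hEb, hne, h0a, h0b, ⟨F, hF, hsa, hsb⟩, amin Ea, amin Eb,
            absMin_amin ⟨a, haEa⟩, absMin_amin ⟨b, hbEb⟩, rfl⟩
        have hleq : l = max (amin Ea) (amin Eb) := label_unique h1.1 hlab hml
        refine ⟨l, List.mem_cons_self, ?_⟩
        have b1 : amin Ea ≤ a.natAbs := amin_le haEa
        have b2 : amin Eb ≤ b.natAbs := amin_le hbEb
        omega
      · obtain ⟨l', hl', hb'⟩ := exists_small_label_aux ha hb hSy H (w' :: rest) ls w'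
          h1.2 rfl hlast hLS' hSv
        exact ⟨l', List.mem_cons_of_mem _ hl', hb'⟩

/-- A merge whose larger min is the minimal cover label cannot merge into the
zero block of `y`. -/
theorem merge_min_not_zblk {x y z : SignedPartition n} (hzc : covby x z) (hzy : le z y)
    (hzl : MaxMinLabel x z (MCL x y)) {B C : Finset ℤ} {hB : B ∈ x.blocks}
    {hC : C ∈ x.blocks} {h0B : (0 : ℤ) ∉ B} {h0C : (0 : ℤ) ∉ C} {hCB : C ≠ B}
    {hCnB : C ≠ negS B} (hzeq : z = mergeSP x B C hB hC h0B h0C hCB hCnB)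
    (hm : MCL x y = amin C) : ¬ C ⊆ y.zblk := by
  intro hCsub
  have hxy : le x y := le_trans hzc.1.1 hzy
  have hzv : z = absorbSP x C hC h0C := by
    have h1 : x.zblk ⊆ y.zblk := zblk_subset_of_le hxy y.zblk_mem y.zero_mem_zblk
    have h2 : negS C ⊆ y.zblk := by
      have := negS_subset hCsub
      rwa [negS_zblk] at this
    exact min_cover_unique hzc hzy hzl covby_absorbSP
      (le_absorb_of_subset hxy y.zblk_mem
        (Finset.union_subset (Finset.union_subset h1 hCsub) h2))
      (maxMinLabel_absorbSP.2 hm)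
  have hzmem : x.zblk ∈ z.blocks := by
    rw [hzeq]
    refine mem_mergeBlocks.2 (Or.inl ⟨x.zblk_mem, ?_, ?_, ?_, ?_⟩)
    · intro h'; exact h0B (h' ▸ x.zero_mem_zblk)
    · intro h'; exact h0C (h' ▸ x.zero_mem_zblk)
    · intro h'; exact h0B (by simpa using (h' ▸ x.zero_mem_zblk : (0 : ℤ) ∈ negS B))
    · intro h'; exact h0C (by simpa using (h' ▸ x.zero_mem_zblk : (0 : ℤ) ∈ negS C))
  rw [hzv] at hzmem
  rcases mem_absorbBlocks.1 hzmem with ⟨_, h', _, _⟩ | h'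
  · exact h' rfl
  · rcases x.nonempty_blocks C hC with ⟨c, hc⟩
    have hcz : c ∈ x.zblk := by
      rw [h']
      exact Finset.mem_union_left _ (Finset.mem_union_right _ hc)
    exact h0C ((eq_of_mem_mem hC x.zblk_mem hc hcz) ▸ x.zero_mem_zblk)

/-- Every saturated chain from `x` to `y` (with any label sequence) contains a label
at most `MCL x y`. -/
theorem chain_label_min {x y z : SignedPartition n} (hzc : covby x z) (hzy : le z y)
    (hzl : MaxMinLabel x z (MCL x y)) {c : List (SignedPartition n)} {ℓ : List ℕ}
    (hsc : IsSatChain x y c) (hls : LabelSeq c ℓ) : ∃ l ∈ ℓ, l ≤ MCL x y := by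
  obtain ⟨hchain, hhead, hlast⟩ := hsc
  rcases covby_cases' hzc with
    ⟨B, C, hB, hC, h0B, h0C, hCB, hCnB, hBC, hzeq⟩ | ⟨B, hB, h0B, hzeq⟩
  · -- z = merge of B and C
    have hm : MCL x y = amin C := by
      rw [hzeq] at hzl
      have := maxMinLabel_mergeSP.1 hzl
      omega
    obtain ⟨a, haB, ha'⟩ := amin_mem (x.nonempty_blocks B hB)
    obtain ⟨b, hbC, hb'⟩ := amin_mem (x.nonempty_blocks C hC)
    obtain ⟨D, hD, hsubD⟩ := merge_le_extract (hzeq ▸ hzy)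
    have h0D : (0 : ℤ) ∉ D := by
      intro h0D
      exact merge_min_not_zblk hzc hzy hzl hzeq hm
        (fun e he => (eq_zblk hD h0D) ▸ hsubD (Finset.mem_union_right _ he))
    have hSy : SameBlk y a b :=
      ⟨D, hD, hsubD (Finset.mem_union_left _ haB), hsubD (Finset.mem_union_right _ hbC)⟩
    have hSx : ¬ SameBlk x a b := by
      rintro ⟨E, hE, haE, hbE⟩
      exact hCB ((eq_of_mem_mem hC hE hbC hbE).trans (eq_of_mem_mem hE hB haE haB))
    have H : ∀ u : SignedPartition n, le u y → ¬ SameBlk u a b →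
        ∀ E ∈ u.blocks, a ∈ E ∨ b ∈ E → (0 : ℤ) ∉ E := by
      intro u huy _ E hE hab h0E
      rcases huy E hE with ⟨D', hD', hED'⟩
      have hDD' : D' = D := by
        rcases hab with h' | h'
        · exact eq_of_mem_mem hD' hD (hED' h') (hsubD (Finset.mem_union_left _ haB))
        · exact eq_of_mem_mem hD' hD (hED' h') (hsubD (Finset.mem_union_right _ hbC))
      exact h0D (hDD' ▸ hED' h0E)
    obtain ⟨l, hl, hbound⟩ := exists_small_label_aux (x.subset_ground B hB haB)
      (x.subset_ground C hC hbC) hSy H c ℓ x hchain hhead hlast hls hSx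
    refine ⟨l, hl, ?_⟩
    omega
  · -- z = absorption of B
    have hm : MCL x y = amin B := by
      rw [hzeq] at hzl
      exact maxMinLabel_absorbSP.1 hzl
    obtain ⟨a, haB, ha'⟩ := amin_mem (x.nonempty_blocks B hB)
    have ha0 : a ≠ 0 := fun h' => h0B (h' ▸ haB)
    have hext := absorb_le_extract (hzeq ▸ hzy)
    have hSy : SameBlk y a (-a) := by
      refine ⟨y.zblk, y.zblk_mem,
        hext (Finset.mem_union_left _ (Finset.mem_union_right _ haB)), ?_⟩
      exact hext (Finset.mem_union_right _ (by simpa using haB))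
    have hSx : ¬ SameBlk x a (-a) := by
      rintro ⟨E, hE, haE, hbE⟩
      exact no_pair hE ((eq_of_mem_mem hE hB haE haB) ▸ h0B) haE hbE
    have H : ∀ u : SignedPartition n, le u y → ¬ SameBlk u a (-a) →
        ∀ E ∈ u.blocks, a ∈ E ∨ -a ∈ E → (0 : ℤ) ∉ E := by
      intro u _ hSu E hE hab h0E
      have hnE : negS E = E := negS_eq_self_of_zero_mem hE h0E
      rcases hab with h' | h'
      · exact hSu ⟨E, hE, h', by rw [← hnE]; simpa using h'⟩
      · refine hSu ⟨E, hE, ?_, h'⟩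
        rw [← hnE]
        simpa using h'
    have hground : a ∈ Finset.Icc (-(n : ℤ)) (n : ℤ) := x.subset_ground B hB haB
    have hground' : -a ∈ Finset.Icc (-(n : ℤ)) (n : ℤ) := by
      simp only [Finset.mem_Icc] at *
      omega
    obtain ⟨l, hl, hbound⟩ := exists_small_label_aux hground hground' hSy H c ℓ x
      hchain hhead hlast hls hSx
    refine ⟨l, hl, ?_⟩
    have : (-a).natAbs = a.natAbs := by omega
    omega

end SignedPartition
namespace SignedPartition

variable {n : ℕ}

theorem card_mergeBlocks_lt {x : SignedPartition n} {B C : Finset ℤ} (hB : B ∈ x.blocks)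
    (hC : C ∈ x.blocks) (h0B : (0 : ℤ) ∉ B) (h0C : (0 : ℤ) ∉ C) (hCB : C ≠ B)
    (hCnB : C ≠ negS B) : (mergeBlocks x B C).card < x.blocks.card := by
  have d1 : B ≠ C := fun h => hCB h.symm
  have d2 : B ≠ negS B := ne_negS_self hB h0B
  have d3 : B ≠ negS C := fun h => hCnB (by rw [h, negS_negS])
  have d4 : C ≠ negS C := ne_negS_self hC h0C
  have d5 : negS B ≠ negS C := fun h => d1 (by simpa using congrArg negS h)
  have hsub : ({B, C, negS B, negS C} : Finset (Finset ℤ)) ⊆ x.blocks := by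
    intro D hD
    simp only [Finset.mem_insert, Finset.mem_singleton] at hD
    rcases hD with rfl | rfl | rfl | rfl
    exacts [hB, hC, negS_mem hB, negS_mem hC]
  have h4 : ({B, C, negS B, negS C} : Finset (Finset ℤ)).card = 4 := by
    rw [Finset.card_insert_of_notMem (by simp [d1, d2, d3]),
      Finset.card_insert_of_notMem (by simp [hCnB, d4]),
      Finset.card_insert_of_notMem (by simp [d5]), Finset.card_singleton]
  have hle4 : 4 ≤ x.blocks.card := h4 ▸ Finset.card_le_card hsub
  have hun := Finset.card_union_le (x.blocks \ {B, C, negS B, negS C})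
    ({B ∪ C, negS (B ∪ C)} : Finset (Finset ℤ))
  have hsd : (x.blocks \ {B, C, negS B, negS C}).card = x.blocks.card - 4 := by
    rw [Finset.card_sdiff_of_subset hsub, h4]
  have hp : ({B ∪ C, negS (B ∪ C)} : Finset (Finset ℤ)).card ≤ 2 :=
    (Finset.card_insert_le _ _).trans (by simp)
  show ((x.blocks \ {B, C, negS B, negS C}) ∪ {B ∪ C, negS (B ∪ C)}).card < x.blocks.card
  omega

theorem card_absorbBlocks_lt {x : SignedPartition n} {B : Finset ℤ} (hB : B ∈ x.blocks)
    (h0B : (0 : ℤ) ∉ B) : (absorbBlocks x B).card < x.blocks.card := by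
  have d1 : x.zblk ≠ B := fun h => h0B (h ▸ x.zero_mem_zblk)
  have d2 : x.zblk ≠ negS B := fun h => h0B (by simpa using (h ▸ x.zero_mem_zblk : (0 : ℤ) ∈ negS B))
  have d3 : B ≠ negS B := ne_negS_self hB h0B
  have hsub : ({x.zblk, B, negS B} : Finset (Finset ℤ)) ⊆ x.blocks := by
    intro D hD
    simp only [Finset.mem_insert, Finset.mem_singleton] at hD
    rcases hD with rfl | rfl | rfl
    exacts [x.zblk_mem, hB, negS_mem hB]
  have h3 : ({x.zblk, B, negS B} : Finset (Finset ℤ)).card = 3 := by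
    rw [Finset.card_insert_of_notMem (by simp [d1, d2]),
      Finset.card_insert_of_notMem (by simp [d3]), Finset.card_singleton]
  have hle3 : 3 ≤ x.blocks.card := h3 ▸ Finset.card_le_card hsub
  have hun := Finset.card_union_le (x.blocks \ {x.zblk, B, negS B})
    ({x.zblk ∪ B ∪ negS B} : Finset (Finset ℤ))
  have hsd : (x.blocks \ {x.zblk, B, negS B}).card = x.blocks.card - 3 := by
    rw [Finset.card_sdiff_of_subset hsub, h3]
  have hp : ({x.zblk ∪ B ∪ negS B} : Finset (Finset ℤ)).card = 1 := Finset.card_singleton _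
  show ((x.blocks \ {x.zblk, B, negS B}) ∪ {x.zblk ∪ B ∪ negS B}).card < x.blocks.card
  omega

theorem satChain_self {y : SignedPartition n} {c : List (SignedPartition n)}
    (h : IsSatChain y y c) : c = [y] := by
  obtain ⟨hc, hh, hl⟩ := h
  cases c with
  | nil => simp at hh
  | cons w rest =>
    simp only [List.head?_cons, Option.some.injEq] at hh
    subst hh
    cases rest with
    | nil => rfl
    | cons t r =>
      have h1 := List.isChain_cons_cons.1 hc
      have hty : le t w := chain_le (t :: r) t w h1.2 rfl (by simpa using hl)
      exact absurd hty h1.1.1.2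

theorem unique_first {x y z : SignedPartition n} (hxy : lt x y) (hzc : covby x z)
    (hzy : le z y) (hzl : MaxMinLabel x z (MCL x y)) {c' : List (SignedPartition n)}
    {ℓ' : List ℕ} (hsc : IsSatChain x y c') (hls : LabelSeq c' ℓ')
    (hinc : ℓ'.Chain' (· ≤ ·)) :
    ∃ c'' ℓ'', c' = x :: c'' ∧ ℓ' = MCL x y :: ℓ'' ∧ IsSatChain z y c'' ∧
      LabelSeq c'' ℓ'' ∧ ℓ''.Chain' (· ≤ ·) := by
  obtain ⟨hc, hh, hl⟩ := hsc
  cases c' with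
  | nil => simp at hh
  | cons w rest =>
    simp only [List.head?_cons, Option.some.injEq] at hh
    subst hh
    cases rest with
    | nil =>
      simp only [List.getLast?_singleton, Option.some.injEq] at hl
      exact absurd hl (ne_of_lt hxy)
    | cons v rest' =>
      have h1 := List.isChain_cons_cons.1 hc
      cases ℓ' with
      | nil => simp only [LabelSeq] at hls
      | cons l1 ls =>
        obtain ⟨hlab, hls'⟩ := hls
        have hlast' : (v :: rest').getLast? = some y := by simpa using hl
        have hvy : le v y := chain_le _ v y h1.2 rfl hlast'
        have hm_le : MCL w y ≤ l1 := MCL_le ⟨v, h1.1, hvy, hlab⟩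
        obtain ⟨l0, hl0, hl0b⟩ := chain_label_min hzc hzy hzl
          (⟨hc, rfl, hl⟩ : IsSatChain w y (w :: v :: rest'))
          (show LabelSeq (w :: v :: rest') (l1 :: ls) from ⟨hlab, hls'⟩)
        have hl1m : l1 = MCL w y := by
          rcases List.mem_cons.1 hl0 with rfl | hl0'
          · omega
          · have hpair := List.isChain_iff_pairwise.1 hinc
            have h2 : l1 ≤ l0 := (List.pairwise_cons.1 hpair).1 l0 hl0'
            omega
        have hvz : z = v :=
          min_cover_unique hzc hzy hzl h1.1 hvy (hl1m ▸ hlab)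
        refine ⟨v :: rest', ls, rfl, by rw [hl1m], ?_, hls', List.IsChain.tail hinc⟩
        rw [hvz]
        exact ⟨h1.2, rfl, hlast'⟩

theorem main : ∀ (k : ℕ) (x y : SignedPartition n), x.blocks.card ≤ k → lt x y →
    ∃ (c : List (SignedPartition n)) (ℓ : List ℕ),
      IsSatChain x y c ∧ LabelSeq c ℓ ∧ ℓ.Chain' (· < ·) ∧ (∀ l ∈ ℓ, MCL x y ≤ l) ∧
        ∀ c' ℓ', IsSatChain x y c' → LabelSeq c' ℓ' → ℓ'.Chain' (· ≤ ·) → c' = c := by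
  intro k
  induction k with
  | zero =>
    intro x y hk _
    obtain ⟨B, hB, _⟩ := x.covers 0 zero_mem_ground
    have := Finset.card_pos.2 ⟨B, hB⟩
    omega
  | succ k ih =>
    intro x y hk hxy
    obtain ⟨z, hzc, hzy, hzl⟩ := MCL_mem hxy
    have hcard : z.blocks.card ≤ k := by
      have hlt : z.blocks.card < x.blocks.card := by
        rcases covby_cases hzc with
          ⟨B, C, hB, hC, h0B, h0C, hCB, hCnB, rfl⟩ | ⟨B, hB, h0B, rfl⟩
        · exact card_mergeBlocks_lt hB hC h0B h0C hCB hCnB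
        · exact card_absorbBlocks_lt hB h0B
      omega
    by_cases hzy' : z = y
    · subst hzy'
      refine ⟨[x, z], [MCL x z], ⟨List.isChain_pair.2 hzc, rfl, rfl⟩,
        ⟨hzl, trivial⟩, List.isChain_singleton _, by simp, ?_⟩
      intro c' ℓ' hsc hls hinc
      obtain ⟨c'', ℓ'', rfl, rfl, hsc'', _, _⟩ :=
        unique_first hxy hzc hzy hzl hsc hls hinc
      rw [satChain_self hsc'']
    · have hzyl : lt z y := lt_of_le_ne hzy hzy'
      obtain ⟨ct, ℓt, hsct, hlst, hltt, hboundt, huniqt⟩ := ih z y hcard hzyl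
      have hmm : MCL x y < MCL z y := MCL_lt_of_coverLabel hzc hzy hzl (MCL_mem hzyl)
      obtain ⟨hct_chain, hct_head, hct_last⟩ := hsct
      cases ct with
      | nil => simp at hct_head
      | cons z0 t =>
        simp only [List.head?_cons, Option.some.injEq] at hct_head
        subst hct_head
        refine ⟨x :: z0 :: t, MCL x y :: ℓt,
          ⟨List.isChain_cons_cons.2 ⟨hzc, hct_chain⟩, rfl, by simpa using hct_last⟩,
          ⟨hzl, hlst⟩, ?_, ?_, ?_⟩
        · refine List.isChain_cons.2 ⟨?_, hltt⟩
          intro h' hh'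
          have h1 := hboundt h' (List.mem_of_mem_head? hh')
          omega
        · intro l hl
          rcases List.mem_cons.1 hl with rfl | hl'
          · exact Nat.le_refl _
          · have := hboundt l hl'
            omega
        · intro c' ℓ' hsc hls hinc
          obtain ⟨c'', ℓ'', rfl, rfl, hsc'', hls'', hinc''⟩ :=
            unique_first hxy hzc hzy hzl hsc hls hinc
          rw [huniqt c'' ℓ'' hsc'' hls'' hinc'']

end SignedPartition
/-- The max-of-min labeling is an R-labeling of `Π_n^B`: for every `x ≺ y` there is a unique
saturated chain from `x` to `y` with (weakly) increasing label sequence, and its labels are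
in fact strictly increasing. -/
theorem maxMinLabel_is_R_labeling (n : ℕ) (x y : SignedPartition n)
    (hxy : SignedPartition.lt x y) :
    ∃ (c : List (SignedPartition n)) (ℓ : List ℕ),
      IsSatChain x y c ∧ LabelSeq c ℓ ∧ ℓ.Chain' (· ≤ ·) ∧ ℓ.Chain' (· < ·) ∧
        ∀ (c' : List (SignedPartition n)) (ℓ' : List ℕ),
          IsSatChain x y c' → LabelSeq c' ℓ' → ℓ'.Chain' (· ≤ ·) → c' = c := by
  obtain ⟨c, ℓ, hsc, hls, hlt, _, huniq⟩ :=
    SignedPartition.main x.blocks.card x y (Nat.le_refl _) hxy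
  exact ⟨c, ℓ, hsc, hls, List.IsChain.imp (fun a b h => Nat.le_of_lt h) hlt, hlt, huniq⟩
end

section
/- Let 1 ≤ u < s ≤ n, let x ∈ L(D_{n,u}) ∖ L(D_n) and y ∈ L(D_{n,s}) ∖ L(D_{n,u}). Then there is no cover relation between x and y in Π_n^B in either direction; i.e., neither x ⋖ y nor y ⋖ x holds. -/
/-- A signed edge `x ⋖ y`: the zero block of `x` (the block containing `0`) is strictly
contained in the zero block of `y`. -/
def SignedEdge {n : ℕ} (x y : SignedPartition n) : Prop :=
  ∃ B C : Finset ℤ, B ∈ x.blocks ∧ (0 : ℤ) ∈ B ∧ C ∈ y.blocks ∧ (0 : ℤ) ∈ C ∧ B ⊂ C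

/-- `NormRep B i`: `B` is a normalized non-zero block with representative `i`, i.e.
`0 ∉ B`, `i = min|B|` and `i ∈ B`. -/
def NormRep (B : Finset ℤ) (i : ℕ) : Prop :=
  (0 : ℤ) ∉ B ∧ (i : ℤ) ∈ B ∧ ∀ b ∈ B, i ≤ b.natAbs

/-- The EL-labeling of `Π_n^B` with values in `ℕ × ℕ`: a coherent edge (two normalized
non-zero blocks with representatives `i`, `j` are merged) gets label `(0, max i j)`, a
non-coherent edge (a normalized block is merged with the negative of a normalized block)
gets label `(2, min i j)`, and a signed edge gets label `(1, 1)`. -/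
def ELlabel {n : ℕ} (x y : SignedPartition n) (l : ℕ × ℕ) : Prop :=
  (SignedEdge x y ∧ l = (1, 1)) ∨
  (∃ R R' : Finset ℤ, R ∈ x.blocks ∧ R' ∈ x.blocks ∧ R ≠ R' ∧
    ∃ i j : ℕ, NormRep R i ∧ NormRep R' j ∧
      ((R ∪ R' ∈ y.blocks ∧ l = (0, max i j)) ∨
       (R ∪ R'.image (fun t => -t) ∈ y.blocks ∧ l = (2, min i j))))

/-- The (strict) lexicographic order on labels in `ℕ × ℕ`. -/
def lexLt (p q : ℕ × ℕ) : Prop := p.1 < q.1 ∨ (p.1 = q.1 ∧ p.2 < q.2)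

/-- Membership in the subposet `L(D_{n,s})` of `Π_n^B`: the partition contains no block of
the form `{k, 0, −k}` with `k ∈ {s+1,…,n}`.  `L(D_{n,n}) = Π_n^B` and `L(D_{n,0}) = L(D_n)`. -/
def memLD {n : ℕ} (s : ℕ) (x : SignedPartition n) : Prop :=
  ∀ k : ℤ, (s : ℤ) < k → k ≤ (n : ℤ) → ({k, 0, -k} : Finset ℤ) ∉ x.blocks

/-- The cover relation of the subposet `L(D_{n,s})`: both elements belong to `L(D_{n,s})`,
`x ≺ y`, and there is no element of `L(D_{n,s})` strictly between them. -/
def covLD {n : ℕ} (s : ℕ) (x y : SignedPartition n) : Prop :=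
  memLD s x ∧ memLD s y ∧ SignedPartition.lt x y ∧
    ∀ z, memLD s z → SignedPartition.lt x z → ¬ SignedPartition.lt z y

/-- A maximal chain of the closed interval `[x,y]` in `L(D_{n,s})`: a list starting at `x`,
ending at `y`, each element covered (in `L(D_{n,s})`) by the next. -/
def IsChainLD {n : ℕ} (s : ℕ) (x y : SignedPartition n) (c : List (SignedPartition n)) : Prop :=
  c.Chain' (covLD s) ∧ c.head? = some x ∧ c.getLast? = some y

/-- `ELLabelSeq c ℓ`: the list `ℓ` is the sequence of EL-labels of the consecutive cover
relations along the chain `c`. -/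
def ELLabelSeq {n : ℕ} : List (SignedPartition n) → List (ℕ × ℕ) → Prop
  | [], [] => True
  | [_], [] => True
  | a :: b :: rest, l :: ls => ELlabel a b l ∧ ELLabelSeq (b :: rest) ls
  | _, _ => False

lemma zero_block_unique {n : ℕ} (z : SignedPartition n) {B C : Finset ℤ}
    (hB : B ∈ z.blocks) (hC : C ∈ z.blocks) (h0B : (0:ℤ) ∈ B) (h0C : (0:ℤ) ∈ C) :
    B = C := by
  by_contra h
  exact (Finset.disjoint_left.mp (z.disjoint_blocks B hB C hC h)) h0B h0C

lemma not_le_of_blocks {n : ℕ} (x y : SignedPartition n) {k m : ℤ}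
    (hk0 : 0 < k) (hkm : k < m)
    (hkx : ({k, 0, -k} : Finset ℤ) ∈ x.blocks)
    (hmy : ({m, 0, -m} : Finset ℤ) ∈ y.blocks) :
    ¬ SignedPartition.le x y := by
  intro hle
  obtain ⟨C, hC, hsub⟩ := hle _ hkx
  have h0 : (0:ℤ) ∈ ({k, 0, -k} : Finset ℤ) := by simp
  have hCeq : C = ({m, 0, -m} : Finset ℤ) :=
    zero_block_unique y hC hmy (hsub h0) (by simp)
  have hkC : k ∈ ({m, 0, -m} : Finset ℤ) := by
    rw [← hCeq]; exact hsub (by simp)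
  simp only [Finset.mem_insert, Finset.mem_singleton] at hkC
  rcases hkC with h | h | h <;> omega

/-- For `1 ≤ u < s ≤ n`, `x ∈ L(D_{n,u}) ∖ L(D_n)` and `y ∈ L(D_{n,s}) ∖ L(D_{n,u})`, there
is no cover relation between `x` and `y` in `Π_n^B` in either direction. -/
theorem no_cover_between_layers (n u s : ℕ) (hu : 1 ≤ u) (hus : u < s) (hsn : s ≤ n)
    (x y : SignedPartition n)
    (hx : memLD u x) (hx' : ¬ memLD 0 x)
    (hy : memLD s y) (hy' : ¬ memLD u y) :
    ¬ SignedPartition.covby x y ∧ ¬ SignedPartition.covby y x := by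
  unfold memLD at hx' hy'
  push_neg at hx' hy'
  obtain ⟨k, hk0, hkn, hkx⟩ := hx'
  obtain ⟨m, hm0, hmn, hmy⟩ := hy'
  simp only [Nat.cast_zero] at hk0
  have hku : k ≤ (u : ℤ) := by
    by_contra h; push_neg at h; exact hx k h hkn hkx
  have hms : m ≤ (s : ℤ) := by
    by_contra h; push_neg at h; exact hy m h hmn hmy
  have hkm : k < m := by
    have : (u:ℤ) < m := hm0
    omega
  constructor
  · intro hcov
    exact not_le_of_blocks x y hk0 hkm hkx hmy hcov.1.1
  · intro hcov
    have hm0' : (0:ℤ) < m := by omega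
    obtain ⟨C, hC, hsub⟩ := hcov.1.1 _ hmy
    have hCeq : C = ({k, 0, -k} : Finset ℤ) :=
      zero_block_unique x hC hkx (hsub (by simp)) (by simp)
    have hmC : m ∈ ({k, 0, -k} : Finset ℤ) := by
      rw [← hCeq]; exact hsub (by simp)
    simp only [Finset.mem_insert, Finset.mem_singleton] at hmC
    rcases hmC with h | h | h <;> omega
end
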